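/- arXiv:1509.00126 — 6 statements merged into one kernel-verified Lean document; each statement's English description precedes it below -/
import Mathlib

section
/- Theorem 2(a): If (1−δ)·f_β > c, then the complete graph on I is strongly efficient, and it is the unique strongly efficient network. -/
open Finset

noncomputable section

open scoped Classical

variable {I : Type*}

/-- Benefit function of the two-type connections model: a connection to a
type-α agent (a member of `A`) yields `fα`, a connection to a type-β agent
yields `fβ` (before spatial discounting). -/
def fTheta [DecidableEq I] (A : Finset I) (fα fβ : ℝ) (j : I) : ℝ :=
  if j ∈ A then fα else fβ

/-- One-period payoff of agent `i` in network `g`: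
`u_i(g) = Σ_{j ≠ i reachable from i} δ^(d_g(i,j)-1) f(θ_j) − deg_g(i)·c`. -/
def payoff [Fintype I] (f : I → ℝ) (c δ : ℝ) (g : SimpleGraph I) (i : I) : ℝ :=
  (∑ j ∈ univ.filter fun j => j ≠ i ∧ g.Reachable i j, δ ^ (g.dist i j - 1) * f j)
    - ((univ.filter fun j => g.Adj i j).card : ℝ) * c

/-- Total one-period payoff `ν(g) = Σ_i u_i(g)`. -/
def totalPayoff [Fintype I] (f : I → ℝ) (c δ : ℝ) (g : SimpleGraph I) : ℝ :=
  ∑ i, payoff f c δ g i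

/-- A network is strongly efficient if it maximizes the total payoff. -/
def StronglyEfficient [Fintype I] (f : I → ℝ) (c δ : ℝ) (g : SimpleGraph I) : Prop :=
  ∀ g' : SimpleGraph I, totalPayoff f c δ g' ≤ totalPayoff f c δ g

/-- A network `g` is core-stable if no subgroup `I'` of agents, together with a
network `g'` all of whose links are inside `I'`, gives every member of `I'` a
weakly higher payoff and some member a strictly higher payoff. -/
def CoreStable [Fintype I] (f : I → ℝ) (c δ : ℝ) (g : SimpleGraph I) : Prop :=
  ¬ ∃ (I' : Finset I) (g' : SimpleGraph I),
      (∀ i j : I, g'.Adj i j → i ∈ I' ∧ j ∈ I') ∧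
      (∀ i ∈ I', payoff f c δ g i ≤ payoff f c δ g' i) ∧
      (∃ i ∈ I', payoff f c δ g i < payoff f c δ g' i)

/-- The network whose links are exactly the pairs with at least one endpoint in `A`. -/
def withCore (A : Finset I) : SimpleGraph I where
  Adj i j := i ≠ j ∧ (i ∈ A ∨ j ∈ A)
  symm := ⟨fun i j h => ⟨h.1.symm, h.2.symm⟩⟩
  loopless := ⟨fun i h => h.1 rfl⟩

/-- The clique on `A`: exactly all pairs of distinct members of `A` are linked. -/
def cliqueOn (A : Finset I) : SimpleGraph I where
  Adj i j := i ≠ j ∧ i ∈ A ∧ j ∈ A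
  symm := ⟨fun i j h => ⟨h.1.symm, h.2.2, h.2.1⟩⟩
  loopless := ⟨fun i h => h.1 rfl⟩

/-- Clique on `A` together with the links `{i₀, j}` for every agent `j ∉ A`. -/
def coreStar (A : Finset I) (i₀ : I) : SimpleGraph I where
  Adj i j := i ≠ j ∧ ((i ∈ A ∧ j ∈ A) ∨ (i = i₀ ∧ j ∉ A) ∨ (j = i₀ ∧ i ∉ A))
  symm := by
    constructor
    rintro i j ⟨hne, h⟩
    refine ⟨hne.symm, ?_⟩
    rcases h with h | h | h
    · exact Or.inl ⟨h.2, h.1⟩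
    · exact Or.inr (Or.inr h)
    · exact Or.inr (Or.inl h)
  loopless := ⟨fun i h => h.1 rfl⟩

/-- The star on all agents centered at `i₀`. -/
def starAll (i₀ : I) : SimpleGraph I where
  Adj i j := i ≠ j ∧ (i = i₀ ∨ j = i₀)
  symm := ⟨fun i j h => ⟨h.1.symm, h.2.symm⟩⟩
  loopless := ⟨fun i h => h.1 rfl⟩

/-- The star on the agents in `A`, centered at `i₀`. -/
def starOn (A : Finset I) (i₀ : I) : SimpleGraph I where
  Adj i j := i ≠ j ∧ (i = i₀ ∨ j = i₀) ∧ i ∈ A ∧ j ∈ A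
  symm := ⟨fun i j h => ⟨h.1.symm, h.2.1.symm, h.2.2.2, h.2.2.1⟩⟩
  loopless := ⟨fun i h => h.1 rfl⟩

/-!
The total payoff is a sum over ordered pairs `(i, j)` of what `j` is worth to `i`: the discounted
benefit of `j` minus the cost of a direct link `i – j`. When `c < (1 - δ) f(θ_j)` every such term
is maximal in the complete network, where it equals `f(θ_j) - c`: without a direct link `j` is
at distance at least two or unreachable, so it is worth at most `δ f(θ_j) < f(θ_j) - c` to `i`.
Hence every network that misses a link has a strictly smaller total payoff than the complete one.
-/

section LinkValue

variable [Fintype I]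

def linkValue (f : I → ℝ) (c δ : ℝ) (g : SimpleGraph I) (i j : I) : ℝ :=
  (if j ≠ i ∧ g.Reachable i j then δ ^ (g.dist i j - 1) * f j else 0)
    - if g.Adj i j then c else 0

lemma payoff_eq_sum_linkValue (f : I → ℝ) (c δ : ℝ) (g : SimpleGraph I) (i : I) :
    payoff f c δ g i = ∑ j, linkValue f c δ g i j := by
  simp only [payoff, linkValue, sum_sub_distrib, sum_filter, card_filter, Nat.cast_sum,
    sum_mul, Nat.cast_ite, Nat.cast_one, Nat.cast_zero, ite_mul, one_mul, zero_mul]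

lemma linkValue_top (f : I → ℝ) (c δ : ℝ) (i j : I) :
    linkValue f c δ ⊤ i j = if j ≠ i then f j - c else 0 := by
  by_cases hij : j = i
  · simp [linkValue, hij]
  · have hadj : (⊤ : SimpleGraph I).Adj i j := Ne.symm hij
    simp [linkValue, hij, hadj, hadj.reachable, SimpleGraph.dist_eq_one_iff_adj.mpr hadj]

lemma linkValue_lt_top {f : I → ℝ} {c δ : ℝ} (hδ0 : 0 ≤ δ) (hδ1 : δ ≤ 1)
    (hf : ∀ j, 0 ≤ f j) (hc : ∀ j, c < (1 - δ) * f j) {g : SimpleGraph I} {i j : I}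
    (hij : j ≠ i) (hadj : ¬ g.Adj i j) :
    linkValue f c δ g i j < linkValue f c δ ⊤ i j := by
  rw [linkValue_top, if_pos hij, linkValue, if_neg hadj, sub_zero]
  split_ifs with hreach
  · have hdist : 1 < g.dist i j := hreach.2.one_lt_dist_of_ne_of_not_adj hij.symm hadj
    calc δ ^ (g.dist i j - 1) * f j ≤ δ * f j :=
          mul_le_mul_of_nonneg_right (pow_le_of_le_one hδ0 hδ1 (by omega)) (hf j)
      _ < f j - c := by linarith [hc j]
  · nlinarith [hc j, hf j]

lemma linkValue_le_top {f : I → ℝ} {c δ : ℝ} (hδ0 : 0 ≤ δ) (hδ1 : δ ≤ 1)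
    (hf : ∀ j, 0 ≤ f j) (hc : ∀ j, c < (1 - δ) * f j) (g : SimpleGraph I) (i j : I) :
    linkValue f c δ g i j ≤ linkValue f c δ ⊤ i j := by
  by_cases hadj : g.Adj i j
  · rw [linkValue_top, if_pos hadj.ne']
    simp [linkValue, hadj, hadj.ne', hadj.reachable, SimpleGraph.dist_eq_one_iff_adj.mpr hadj]
  by_cases hij : j = i
  · simp [linkValue, hij]
  exact (linkValue_lt_top hδ0 hδ1 hf hc hij hadj).le

end LinkValue

section Efficiency

variable [Fintype I] {f : I → ℝ} {c δ : ℝ}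

lemma payoff_le_top (hδ0 : 0 ≤ δ) (hδ1 : δ ≤ 1) (hf : ∀ j, 0 ≤ f j)
    (hc : ∀ j, c < (1 - δ) * f j) (g : SimpleGraph I) (i : I) :
    payoff f c δ g i ≤ payoff f c δ ⊤ i := by
  rw [payoff_eq_sum_linkValue, payoff_eq_sum_linkValue]
  exact sum_le_sum fun j _ => linkValue_le_top hδ0 hδ1 hf hc g i j

lemma payoff_lt_top (hδ0 : 0 ≤ δ) (hδ1 : δ ≤ 1) (hf : ∀ j, 0 ≤ f j)
    (hc : ∀ j, c < (1 - δ) * f j) {g : SimpleGraph I} {i j : I}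
    (hij : j ≠ i) (hadj : ¬ g.Adj i j) :
    payoff f c δ g i < payoff f c δ ⊤ i := by
  rw [payoff_eq_sum_linkValue, payoff_eq_sum_linkValue]
  exact sum_lt_sum (fun j _ => linkValue_le_top hδ0 hδ1 hf hc g i j)
    ⟨j, mem_univ j, linkValue_lt_top hδ0 hδ1 hf hc hij hadj⟩

lemma totalPayoff_le_top (hδ0 : 0 ≤ δ) (hδ1 : δ ≤ 1) (hf : ∀ j, 0 ≤ f j)
    (hc : ∀ j, c < (1 - δ) * f j) (g : SimpleGraph I) :
    totalPayoff f c δ g ≤ totalPayoff f c δ ⊤ :=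
  sum_le_sum fun i _ => payoff_le_top hδ0 hδ1 hf hc g i

lemma totalPayoff_lt_top (hδ0 : 0 ≤ δ) (hδ1 : δ ≤ 1) (hf : ∀ j, 0 ≤ f j)
    (hc : ∀ j, c < (1 - δ) * f j) {g : SimpleGraph I} (hg : g ≠ ⊤) :
    totalPayoff f c δ g < totalPayoff f c δ ⊤ := by
  obtain ⟨i, j, hij, hadj⟩ := SimpleGraph.ne_top_iff_exists_not_adj.mp hg
  exact sum_lt_sum (fun i _ => payoff_le_top hδ0 hδ1 hf hc g i)
    ⟨i, mem_univ i, payoff_lt_top hδ0 hδ1 hf hc hij.symm hadj⟩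

lemma stronglyEfficient_top (hδ0 : 0 ≤ δ) (hδ1 : δ ≤ 1) (hf : ∀ j, 0 ≤ f j)
    (hc : ∀ j, c < (1 - δ) * f j) :
    StronglyEfficient f c δ (⊤ : SimpleGraph I) :=
  totalPayoff_le_top hδ0 hδ1 hf hc

lemma StronglyEfficient.eq_top (hδ0 : 0 ≤ δ) (hδ1 : δ ≤ 1) (hf : ∀ j, 0 ≤ f j)
    (hc : ∀ j, c < (1 - δ) * f j) {g : SimpleGraph I} (hg : StronglyEfficient f c δ g) :
    g = ⊤ := by
  by_contra hne
  exact (hg ⊤).not_gt (totalPayoff_lt_top hδ0 hδ1 hf hc hne)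

end Efficiency

lemma le_fTheta [DecidableEq I] (A : Finset I) {fα fβ : ℝ} (h : fβ ≤ fα) (j : I) :
    fβ ≤ fTheta A fα fβ j := by
  unfold fTheta
  split_ifs
  exacts [h, le_rfl]

theorem thm2a_general {I : Type*} [Fintype I] [DecidableEq I]
    (A : Finset I) (fα fβ c δ : ℝ)
    (hfαβ : fβ < fα) (hfβ : 0 < fβ)
    (hδ0 : 0 < δ) (hδ1 : δ < 1)
    (h : (1 - δ) * fβ > c) :
    StronglyEfficient (fTheta A fα fβ) c δ (⊤ : SimpleGraph I) ∧
      ∀ g : SimpleGraph I, StronglyEfficient (fTheta A fα fβ) c δ g → g = ⊤ := by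
  have hf : ∀ j, 0 ≤ fTheta A fα fβ j := fun j => hfβ.le.trans (le_fTheta A hfαβ.le j)
  have hc : ∀ j, c < (1 - δ) * fTheta A fα fβ j := fun j =>
    h.trans_le (mul_le_mul_of_nonneg_left (le_fTheta A hfαβ.le j) (by linarith))
  exact ⟨stronglyEfficient_top hδ0.le hδ1.le hf hc,
    fun g hg => hg.eq_top hδ0.le hδ1.le hf hc⟩

/-- Theorem 2(a): if `(1−δ)·fβ > c`, the complete network is the unique
strongly efficient network. -/
theorem thm2a {I : Type*} [Fintype I] [DecidableEq I]
    (A : Finset I) (fα fβ c δ : ℝ)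
    (hA : 1 ≤ A.card) (hB : 1 ≤ Aᶜ.card)
    (hfαβ : fβ < fα) (hfβ : 0 < fβ) (hc : 0 < c)
    (hδ0 : 0 < δ) (hδ1 : δ < 1)
    (h : (1 - δ) * fβ > c) :
    StronglyEfficient (fTheta A fα fβ) c δ (⊤ : SimpleGraph I) ∧
      ∀ g : SimpleGraph I, StronglyEfficient (fTheta A fα fβ) c δ g → g = ⊤ :=
  thm2a_general A fα fβ c δ hfαβ hfβ hδ0 hδ1 h
end
end

section
/- Theorem 2(d): If (1−δ)·f_α > c > (1−δ)·(f_α+f_β)/2 and (1+δ(n_α−1))·f_α + (1+δ(n_α+n_β−2))·f_β < 2c, then the unique strongly efficient network is the graph whose edges are exactly all pairs of distinct type-α agents (a clique on A, with every type-β agent a singleton). -/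
open Finset

noncomputable section

open scoped Classical

variable {I : Type*}

/-!
The total payoff is the sum, over ordered pairs `(i, j)` of distinct agents, of
`δ^(d(i,j)-1) f(θ_j)` if `j` is reachable from `i`, minus `c` if `i` and `j` are linked. A pair
that is not linked is worth at most `δ f(θ_j)`, so by the first inequality a pair of type-α
agents is worth at most `f_α - c`, and strictly less unless it is linked. The remaining pairs are
charged to their type-β member `j` (mixed pairs in both directions, pairs of type-β agents in
the direction leaving `j`). If `j` is isolated its share vanishes. Otherwise each charged pair is
worth at most `δ (f_α + f_β)` resp. `δ f_β` (by the second inequality), and the pair through a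
link of `j` only `f_α + f_β - 2c` resp. `f_β - c`; by the third inequality (with the first, for
a link to a type-β agent) the share of `j` is negative.
-/

open SimpleGraph

theorem Finset.sum_le_add_card_sub_one_mul {ι : Type*} {s : Finset ι} {F : ι → ℝ} {a b : ℝ}
    {k : ι} (hk : k ∈ s) (hle : ∀ i ∈ s, F i ≤ a) (hFk : F k ≤ b) :
    ∑ i ∈ s, F i ≤ b + ((#s : ℝ) - 1) * a := by
  classical
  rw [← add_sum_erase s F hk, ← cast_card_erase_of_mem hk, ← nsmul_eq_mul]
  exact add_le_add hFk (sum_le_card_nsmul _ _ _ fun i hi => hle i (mem_of_mem_erase hi))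

def pairPayoff (f : I → ℝ) (c δ : ℝ) (g : SimpleGraph I) (i j : I) : ℝ :=
  (if g.Reachable i j then δ ^ (g.dist i j - 1) * f j else 0) - if g.Adj i j then c else 0

section PairPayoff

variable {f : I → ℝ} {c δ : ℝ} {g : SimpleGraph I} {i j : I}

theorem payoff_eq_sum_pairPayoff [Fintype I] [DecidableEq I] (f : I → ℝ) (c δ : ℝ)
    (g : SimpleGraph I) (i : I) :
    payoff f c δ g i = ∑ j ∈ univ.erase i, pairPayoff f c δ g i j := by
  rw [payoff, sum_filter, card_filter, Nat.cast_sum, sum_mul, ← sum_sub_distrib,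
    ← sum_erase_add _ _ (mem_univ i)]
  rw [if_neg (by simp), if_neg g.irrefl, Nat.cast_zero, zero_mul, sub_zero, add_zero]
  refine sum_congr rfl fun j hj => ?_
  simp [pairPayoff, ne_of_mem_erase hj]

theorem pairPayoff_of_adj (h : g.Adj i j) : pairPayoff f c δ g i j = f j - c := by
  simp [pairPayoff, h, h.reachable, dist_eq_one_iff_adj.2 h]

theorem pairPayoff_le_of_not_adj (hδ0 : 0 ≤ δ) (hδ1 : δ ≤ 1) (hf : 0 ≤ f j) (hij : i ≠ j)
    (h : ¬ g.Adj i j) : pairPayoff f c δ g i j ≤ δ * f j := by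
  by_cases hr : g.Reachable i j
  · have hd := hr.one_lt_dist_of_ne_of_not_adj hij h
    have hpow : δ ^ (g.dist i j - 1) ≤ δ := by
      simpa using pow_le_pow_of_le_one hδ0 hδ1 (by omega : 1 ≤ g.dist i j - 1)
    simpa [pairPayoff, hr, h] using mul_le_mul_of_nonneg_right hpow hf
  · simpa [pairPayoff, hr, h] using mul_nonneg hδ0 hf

theorem pairPayoff_lt_of_not_adj (hδ0 : 0 ≤ δ) (hδ1 : δ ≤ 1) (hf : 0 ≤ f j)
    (hc : c < (1 - δ) * f j) (hij : i ≠ j) (h : ¬ g.Adj i j) :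
    pairPayoff f c δ g i j < f j - c := by
  linarith [pairPayoff_le_of_not_adj (c := c) hδ0 hδ1 hf hij h]

theorem pairPayoff_le_mul (hδ0 : 0 ≤ δ) (hδ1 : δ ≤ 1) (hf : 0 ≤ f j)
    (hc : (1 - δ) * f j ≤ c) (hij : i ≠ j) : pairPayoff f c δ g i j ≤ δ * f j := by
  by_cases h : g.Adj i j
  · rw [pairPayoff_of_adj h]; linarith
  · exact pairPayoff_le_of_not_adj hδ0 hδ1 hf hij h

theorem pairPayoff_add_pairPayoff_le (hδ0 : 0 ≤ δ) (hδ1 : δ ≤ 1) (hfi : 0 ≤ f i) (hfj : 0 ≤ f j)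
    (hc : (1 - δ) * (f i + f j) ≤ 2 * c) (hij : i ≠ j) :
    pairPayoff f c δ g i j + pairPayoff f c δ g j i ≤ δ * (f i + f j) := by
  by_cases h : g.Adj i j
  · rw [pairPayoff_of_adj h, pairPayoff_of_adj h.symm]; linarith
  · have hji : ¬ g.Adj j i := fun h' => h h'.symm
    linarith [pairPayoff_le_of_not_adj (c := c) hδ0 hδ1 hfj hij h,
      pairPayoff_le_of_not_adj (c := c) hδ0 hδ1 hfi hij.symm hji]

theorem pairPayoff_eq_zero_of_isIsolated_left (h : g.IsIsolated i) (hij : i ≠ j) :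
    pairPayoff f c δ g i j = 0 := by
  simp [pairPayoff, h j, not_reachable_of_neighborSet_left_eq_empty hij h.neighborSet_eq_empty]

theorem pairPayoff_eq_zero_of_isIsolated_right (h : g.IsIsolated j) (hij : i ≠ j) :
    pairPayoff f c δ g i j = 0 := by
  have hadj : ¬ g.Adj i j := fun h' => h i h'.symm
  simp [pairPayoff, hadj, not_reachable_of_neighborSet_right_eq_empty hij h.neighborSet_eq_empty]

end PairPayoff

def betaShare [Fintype I] [DecidableEq I] (A : Finset I) (F : I → I → ℝ) (j : I) : ℝ :=
  ∑ i ∈ A, (F i j + F j i) + ∑ i ∈ Aᶜ.erase j, F j i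

theorem sum_sum_erase_eq_add_sum_betaShare [Fintype I] [DecidableEq I] (A : Finset I)
    (F : I → I → ℝ) :
    ∑ i, ∑ j ∈ univ.erase i, F i j
      = ∑ i ∈ A, ∑ j ∈ A.erase i, F i j + ∑ j ∈ Aᶜ, betaShare A F j := by
  have hsplit (i : I) :
      ∑ j ∈ univ.erase i, F i j = ∑ j ∈ A.erase i, F i j + ∑ j ∈ Aᶜ.erase i, F i j := by
    rw [← union_compl A, erase_union_distrib, sum_union]
    exact disjoint_compl_right.mono (erase_subset i A) (erase_subset i Aᶜ)
  have hα : ∀ i ∈ A, ∑ j ∈ univ.erase i, F i j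
      = ∑ j ∈ A.erase i, F i j + ∑ j ∈ Aᶜ, F i j := fun i hi => by
    rw [hsplit, erase_eq_of_notMem (notMem_compl.2 hi)]
  have hβ : ∀ j ∈ Aᶜ, ∑ i ∈ univ.erase j, F j i
      = ∑ i ∈ A, F j i + ∑ i ∈ Aᶜ.erase j, F j i := fun j hj => by
    rw [hsplit, erase_eq_of_notMem (mem_compl.1 hj)]
  rw [← sum_add_sum_compl A, sum_congr rfl hα, sum_congr rfl hβ]
  simp only [betaShare, sum_add_distrib]
  rw [sum_comm (s := A) (t := Aᶜ)]
  ring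

theorem eq_cliqueOn_of_forall {A : Finset I} {g : SimpleGraph I}
    (hα : ∀ i ∈ A, ∀ j ∈ A, i ≠ j → g.Adj i j) (hβ : ∀ j ∉ A, g.IsIsolated j) :
    g = cliqueOn A := by
  ext i j
  refine ⟨fun h => ⟨h.ne, ?_, ?_⟩, fun ⟨hij, hi, hj⟩ => hα i hi j hj hij⟩
  · by_contra hi; exact hβ i hi j h
  · by_contra hj; exact hβ j hj i h.symm

theorem totalPayoff_eq_sum_betaShare [Fintype I] [DecidableEq I] (A : Finset I) (f : I → ℝ)
    (c δ : ℝ) (g : SimpleGraph I) :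
    totalPayoff f c δ g = ∑ i ∈ A, ∑ j ∈ A.erase i, pairPayoff f c δ g i j
      + ∑ j ∈ Aᶜ, betaShare A (pairPayoff f c δ g) j := by
  rw [← sum_sum_erase_eq_add_sum_betaShare]
  exact sum_congr rfl fun i _ => payoff_eq_sum_pairPayoff f c δ g i

theorem pairPayoff_le_pairPayoff_cliqueOn [DecidableEq I] {A : Finset I} {fα fβ c δ : ℝ}
    {g : SimpleGraph I} (hδ0 : 0 ≤ δ) (hδ1 : δ ≤ 1) (hfα : 0 ≤ fα)
    (h1 : c < (1 - δ) * fα) {i j : I} (hi : i ∈ A) (hj : j ∈ A) (hij : i ≠ j) :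
    pairPayoff (fTheta A fα fβ) c δ g i j ≤ pairPayoff (fTheta A fα fβ) c δ (cliqueOn A) i j ∧
      (¬ g.Adj i j → pairPayoff (fTheta A fα fβ) c δ g i j
        < pairPayoff (fTheta A fα fβ) c δ (cliqueOn A) i j) := by
  have hfj : fTheta A fα fβ j = fα := if_pos hj
  have hlt (hadj : ¬ g.Adj i j) := pairPayoff_lt_of_not_adj hδ0 hδ1 (hfj ▸ hfα) (hfj ▸ h1) hij hadj
  rw [pairPayoff_of_adj (show (cliqueOn A).Adj i j from ⟨hij, hi, hj⟩)]
  refine ⟨?_, hlt⟩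
  by_cases hadj : g.Adj i j
  · exact (pairPayoff_of_adj hadj).le
  · exact (hlt hadj).le

section TwoTypes

variable [Fintype I] [DecidableEq I] {A : Finset I} {fα fβ c δ : ℝ} {g : SimpleGraph I}

theorem betaShare_eq_zero_of_isIsolated {f : I → ℝ} {j : I} (hj : j ∉ A) (h : g.IsIsolated j) :
    betaShare A (pairPayoff f c δ g) j = 0 := by
  rw [betaShare, sum_eq_zero, sum_eq_zero, add_zero]
  · exact fun i hi => pairPayoff_eq_zero_of_isIsolated_left h (ne_of_mem_erase hi).symm
  · intro i hi
    have hij : i ≠ j := ne_of_mem_of_not_mem hi hj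
    rw [pairPayoff_eq_zero_of_isIsolated_right h hij,
      pairPayoff_eq_zero_of_isIsolated_left h hij.symm, add_zero]

theorem betaShare_neg_of_adj (hδ0 : 0 ≤ δ) (hδ1 : δ < 1) (hfβ : 0 < fβ) (hfαβ : fβ < fα)
    (h1 : c < (1 - δ) * fα) (h2 : (1 - δ) * (fα + fβ) < 2 * c)
    (h3 : (1 + δ * ((#A : ℝ) - 1)) * fα + (1 + δ * ((#A : ℝ) + (#Aᶜ : ℝ) - 2)) * fβ < 2 * c)
    {j k : I} (hj : j ∉ A) (hjk : g.Adj j k) :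
    betaShare A (pairPayoff (fTheta A fα fβ) c δ g) j < 0 := by
  have hmixed : ∀ i ∈ A, pairPayoff (fTheta A fα fβ) c δ g i j
      + pairPayoff (fTheta A fα fβ) c δ g j i ≤ δ * (fα + fβ) := fun i hi => by
    simpa [fTheta, hi, hj, add_comm] using pairPayoff_add_pairPayoff_le (g := g)
      (f := fTheta A fα fβ) hδ0 hδ1.le (by simp [fTheta, hi]; linarith)
      (by simp [fTheta, hj]; linarith) (by simp [fTheta, hi, hj]; linarith)
      (ne_of_mem_of_not_mem hi hj)
  have hββ : ∀ i ∈ Aᶜ.erase j, pairPayoff (fTheta A fα fβ) c δ g j i ≤ δ * fβ := fun i hi => by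
    have hi' : i ∉ A := mem_compl.1 (mem_of_mem_erase hi)
    simpa [fTheta, hi'] using pairPayoff_le_mul (g := g) (f := fTheta A fα fβ) hδ0 hδ1.le
      (by simp [fTheta, hi']; linarith) (by simp [fTheta, hi']; nlinarith)
      (ne_of_mem_erase hi).symm
  have hcard : (#(Aᶜ.erase j) : ℝ) = #Aᶜ - 1 := cast_card_erase_of_mem (mem_compl.2 hj)
  rw [betaShare]
  by_cases hk : k ∈ A
  · have hα := sum_le_add_card_sub_one_mul hk hmixed (b := fβ - c + (fα - c)) (by
      rw [pairPayoff_of_adj hjk.symm, pairPayoff_of_adj hjk]; simp [fTheta, hk, hj])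
    have hβ := sum_le_card_nsmul (Aᶜ.erase j) _ _ hββ
    rw [nsmul_eq_mul, hcard] at hβ
    linarith
  · have hα := sum_le_card_nsmul A _ _ hmixed
    have hβ := sum_le_add_card_sub_one_mul (mem_erase.2 ⟨hjk.ne', mem_compl.2 hk⟩) hββ
      (b := fβ - c) (by rw [pairPayoff_of_adj hjk]; simp [fTheta, hk])
    rw [nsmul_eq_mul] at hα
    rw [hcard] at hβ
    linarith

theorem betaShare_nonpos (hδ0 : 0 ≤ δ) (hδ1 : δ < 1) (hfβ : 0 < fβ) (hfαβ : fβ < fα)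
    (h1 : c < (1 - δ) * fα) (h2 : (1 - δ) * (fα + fβ) < 2 * c)
    (h3 : (1 + δ * ((#A : ℝ) - 1)) * fα + (1 + δ * ((#A : ℝ) + (#Aᶜ : ℝ) - 2)) * fβ < 2 * c)
    {j : I} (hj : j ∉ A) : betaShare A (pairPayoff (fTheta A fα fβ) c δ g) j ≤ 0 := by
  by_cases hiso : g.IsIsolated j
  · exact (betaShare_eq_zero_of_isIsolated hj hiso).le
  · obtain ⟨k, hjk⟩ := exists_adj_iff_not_isIsolated.2 hiso
    exact (betaShare_neg_of_adj hδ0 hδ1 hfβ hfαβ h1 h2 h3 hj hjk).le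

theorem totalPayoff_lt_totalPayoff_cliqueOn (hδ0 : 0 ≤ δ) (hδ1 : δ < 1) (hfβ : 0 < fβ)
    (hfαβ : fβ < fα) (h1 : c < (1 - δ) * fα) (h2 : (1 - δ) * (fα + fβ) < 2 * c)
    (h3 : (1 + δ * ((#A : ℝ) - 1)) * fα + (1 + δ * ((#A : ℝ) + (#Aᶜ : ℝ) - 2)) * fβ < 2 * c)
    (hg : g ≠ cliqueOn A) :
    totalPayoff (fTheta A fα fβ) c δ g < totalPayoff (fTheta A fα fβ) c δ (cliqueOn A) := by
  have hαpair {i j} (hi : i ∈ A) (hj : j ∈ A.erase i) :=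
    pairPayoff_le_pairPayoff_cliqueOn (g := g) (fβ := fβ) hδ0 hδ1.le (hfβ.trans hfαβ).le h1 hi
      (mem_of_mem_erase hj) (ne_of_mem_erase hj).symm
  have hβ : ∀ j ∈ Aᶜ, betaShare A (pairPayoff (fTheta A fα fβ) c δ g) j ≤ 0 :=
    fun j hj => betaShare_nonpos hδ0 hδ1 hfβ hfαβ h1 h2 h3 (mem_compl.1 hj)
  have hβ_clique : ∑ j ∈ Aᶜ, betaShare A (pairPayoff (fTheta A fα fβ) c δ (cliqueOn A)) j = 0 :=
    sum_eq_zero fun j hj => betaShare_eq_zero_of_isIsolated (mem_compl.1 hj)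
      fun _ h => mem_compl.1 hj h.2.1
  rw [totalPayoff_eq_sum_betaShare A, totalPayoff_eq_sum_betaShare A, hβ_clique, add_zero]
  by_cases hα : ∀ i ∈ A, ∀ j ∈ A, i ≠ j → g.Adj i j
  · obtain ⟨j, hj, hjiso⟩ : ∃ j ∉ A, ¬ g.IsIsolated j := by
      by_contra! h
      exact hg (eq_cliqueOn_of_forall hα h)
    obtain ⟨k, hjk⟩ := exists_adj_iff_not_isIsolated.2 hjiso
    have hβ_neg := sum_neg' hβ
      ⟨j, mem_compl.2 hj, betaShare_neg_of_adj hδ0 hδ1 hfβ hfαβ h1 h2 h3 hj hjk⟩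
    have hα_le := sum_le_sum fun i hi => sum_le_sum fun j hj => (hαpair hi hj).1
    linarith
  · push Not at hα
    obtain ⟨i, hi, j, hj, hij, hnadj⟩ := hα
    have hα_lt := sum_lt_sum (fun i hi => sum_le_sum fun j hj => (hαpair hi hj).1)
      ⟨i, hi, sum_lt_sum (fun j hj => (hαpair hi hj).1)
        ⟨j, mem_erase.2 ⟨hij.symm, hj⟩, (hαpair hi (mem_erase.2 ⟨hij.symm, hj⟩)).2 hnadj⟩⟩
    linarith [sum_nonpos hβ]

end TwoTypes

theorem thm2d_general {I : Type*} [Fintype I] [DecidableEq I]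
    (A : Finset I) (fα fβ c δ : ℝ)
    (hfαβ : fβ < fα) (hfβ : 0 < fβ)
    (hδ0 : 0 < δ) (hδ1 : δ < 1)
    (h1 : (1 - δ) * fα > c) (h2 : c > (1 - δ) * ((fα + fβ) / 2))
    (h3 : (1 + δ * ((A.card : ℝ) - 1)) * fα + (1 + δ * ((A.card : ℝ) + (Aᶜ.card : ℝ) - 2)) * fβ < 2 * c) :
    StronglyEfficient (fTheta A fα fβ) c δ (cliqueOn A) ∧
      ∀ g : SimpleGraph I, StronglyEfficient (fTheta A fα fβ) c δ g → g = cliqueOn A := by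
  have hlt (g : SimpleGraph I) (hg : g ≠ cliqueOn A) :
      totalPayoff (fTheta A fα fβ) c δ g < totalPayoff (fTheta A fα fβ) c δ (cliqueOn A) :=
    totalPayoff_lt_totalPayoff_cliqueOn hδ0.le hδ1 hfβ hfαβ h1 (by linarith) h3 hg
  refine ⟨fun g => ?_, fun g hg => by_contra fun hne => (hg _).not_gt (hlt g hne)⟩
  rcases eq_or_ne g (cliqueOn A) with rfl | hne
  · exact le_rfl
  · exact (hlt g hne).le

/-- Theorem 2(d): the unique strongly efficient network is the clique on the
type-α agents, with every type-β agent a singleton. -/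
theorem thm2d {I : Type*} [Fintype I] [DecidableEq I]
    (A : Finset I) (fα fβ c δ : ℝ)
    (hA : 1 ≤ A.card) (hB : 1 ≤ Aᶜ.card)
    (hfαβ : fβ < fα) (hfβ : 0 < fβ) (hc : 0 < c)
    (hδ0 : 0 < δ) (hδ1 : δ < 1)
    (h1 : (1 - δ) * fα > c) (h2 : c > (1 - δ) * ((fα + fβ) / 2))
    (h3 : (1 + δ * ((A.card : ℝ) - 1)) * fα + (1 + δ * ((A.card : ℝ) + (Aᶜ.card : ℝ) - 2)) * fβ < 2 * c) :
    StronglyEfficient (fTheta A fα fβ) c δ (cliqueOn A) ∧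
      ∀ g : SimpleGraph I, StronglyEfficient (fTheta A fα fβ) c δ g → g = cliqueOn A :=
  thm2d_general A fα fβ c δ hfαβ hfβ hδ0 hδ1 h1 h2 h3
end
end

section
/- Theorem 2(f): Suppose n_α ≥ 2. If (1−δ)·f_α < c and (1+δ(n_α−1))·f_α + (1+δ(n_α+n_β−2))·f_β < 2c < f_α·(2+δ(n_α−2)), then a network g is strongly efficient if and only if there exists a type-α agent i₀ ∈ A such that the edge set of g is exactly {{i₀, j} : j ∈ A, j ≠ i₀} (a star encompassing every type-α agent with a type-α center, with every type-β agent a singleton). -/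
open Finset

noncomputable section

open scoped Classical

variable {I : Type*}

/-!
Replacing `δ ^ (d - 1)` by `δ` for every indirect connection bounds the total payoff by `δ` times
the benefits of all reachable pairs plus, for every link, the surplus `(1 - δ) (f_i + f_j) - 2 c`,
which is negative because `(1 - δ) fα < c`. A component with `k` agents has at least `k - 1`
links, which bounds its contribution by `componentBound`. By the second inequality a component in
which some type-β agent is linked does worse than the star on its type-α agents alone, and by the
third one merging the stars of the `r` components that meet `A` into a single star on `A` gains
at least `(r - 1) (δ |A| fα + 2 ((1 - δ) fα - c)) ≥ 0`. In the equality case no type-β agent is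
linked, `A` lies in one component with only `|A| - 1` links, and all distances are at most two:
`g` is a star.
-/

namespace SimpleGraph

variable {V : Type*} {G : SimpleGraph V}

lemma Reachable.deleteEdges_or {u v x y : V} (h : G.Reachable x y) :
    (G.deleteEdges {s(u, v)}).Reachable x y ∨
      (((G.deleteEdges {s(u, v)}).Reachable x u ∨ (G.deleteEdges {s(u, v)}).Reachable x v) ∧
        ((G.deleteEdges {s(u, v)}).Reachable u y ∨ (G.deleteEdges {s(u, v)}).Reachable v y)) := by
  obtain ⟨w⟩ := h
  induction w with
  | nil => exact .inl .rfl
  | @cons x z y hxz p ih =>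
    by_cases he : s(x, z) = s(u, v)
    · rcases Sym2.eq_iff.mp he with ⟨rfl, rfl⟩ | ⟨rfl, rfl⟩
      · exact .inr ⟨.inl .rfl, ih.elim .inr (·.2)⟩
      · exact .inr ⟨.inr .rfl, ih.elim .inl (·.2)⟩
    · have hxz' : (G.deleteEdges {s(u, v)}).Reachable x z :=
        (deleteEdges_adj.mpr ⟨hxz, by simpa using he⟩).reachable
      exact ih.imp hxz'.trans fun h => ⟨h.1.imp hxz'.trans hxz'.trans, h.2⟩

section Distance

variable {δ : ℝ} {i j : V}

lemma pow_dist_sub_one_le (hδ0 : 0 ≤ δ) (hδ1 : δ ≤ 1) (hr : G.Reachable i j) (hne : j ≠ i) :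
    δ ^ (G.dist i j - 1) ≤ if G.Adj i j then 1 else δ := by
  split_ifs with hadj
  · simp [dist_eq_one_iff_adj.mpr hadj]
  · exact pow_le_of_le_one hδ0 hδ1
      (by have := hr.one_lt_dist_of_ne_of_not_adj hne.symm hadj; omega)

lemma pow_dist_sub_one_lt (hδ0 : 0 < δ) (hδ1 : δ < 1) (hd : 2 < G.dist i j) :
    δ ^ (G.dist i j - 1) < if G.Adj i j then 1 else δ := by
  rw [if_neg fun h => by rw [dist_eq_one_iff_adj.mpr h] at hd; omega]
  exact pow_lt_self_of_lt_one₀ hδ0 hδ1 (by omega)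

lemma pow_dist_sub_one_eq (hr : G.Reachable i j) (hne : j ≠ i) (hd : G.dist i j ≤ 2) :
    δ ^ (G.dist i j - 1) = if G.Adj i j then 1 else δ := by
  split_ifs with hadj
  · simp [dist_eq_one_iff_adj.mpr hadj]
  · rw [show G.dist i j = 2 by have := hr.one_lt_dist_of_ne_of_not_adj hne.symm hadj; omega]
    simp

end Distance

section Fintype

variable [Fintype V]

lemma sum_sum_neighborFinset (t : V → ℝ) :
    ∑ i, ∑ j ∈ G.neighborFinset i, t j = ∑ j, t j * G.degree j := by
  simp_rw [neighborFinset_eq_filter, sum_filter]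
  rw [sum_comm]
  refine sum_congr rfl fun j _ => ?_
  simp_rw [adj_comm _ _ j]
  rw [← sum_filter, sum_const, ← neighborFinset_eq_filter, card_neighborFinset_eq_degree,
    nsmul_eq_mul, mul_comm]

variable [DecidableEq V]

/-- The components other than that of `v` inject into those of `G`. -/
lemma card_connectedComponent_deleteEdges_le (u v : V) :
    Nat.card (G.deleteEdges {s(u, v)}).ConnectedComponent ≤
      Nat.card G.ConnectedComponent + 1 := by
  have hinj : Set.InjOn (ConnectedComponent.map (Hom.ofLE (G.deleteEdges_le {s(u, v)})))
      (univ.erase ((G.deleteEdges {s(u, v)}).connectedComponentMk v) : Finset _) := by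
    intro C hC D hD hCD
    induction C using ConnectedComponent.ind with | h x => ?_
    induction D using ConnectedComponent.ind with | h y => ?_
    have hx : ¬ (G.deleteEdges {s(u, v)}).Reachable x v :=
      fun h => (mem_erase.mp hC).1 (ConnectedComponent.sound h)
    have hy : ¬ (G.deleteEdges {s(u, v)}).Reachable y v :=
      fun h => (mem_erase.mp hD).1 (ConnectedComponent.sound h)
    rcases (ConnectedComponent.exact hCD).deleteEdges_or (u := u) (v := v) with h | ⟨hxu, huy⟩
    · exact ConnectedComponent.sound h
    · exact ConnectedComponent.sound ((hxu.resolve_right hx).trans (huy.resolve_right (hy ∘ .symm)))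
  have := card_le_card_of_injOn (t := univ) _ (fun _ _ => mem_univ _) hinj
  rw [card_erase_of_mem (mem_univ _), card_univ, card_univ, ← Nat.card_eq_fintype_card,
    ← Nat.card_eq_fintype_card] at this
  omega

lemma card_le_card_edgeFinset_add_card_connectedComponent :
    Fintype.card V ≤ #G.edgeFinset + Nat.card G.ConnectedComponent := by
  induction hn : #G.edgeFinset generalizing G with
  | zero =>
    obtain rfl : G = ⊥ := edgeFinset_eq_empty.mp (card_eq_zero.mp hn)
    have hinj : Function.Injective (⊥ : SimpleGraph V).connectedComponentMk :=
      fun _ _ h => reachable_bot.mp (ConnectedComponent.exact h)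
    simpa [Nat.card_eq_fintype_card] using Fintype.card_le_of_injective _ hinj
  | succ n ih =>
    obtain ⟨e, he⟩ : G.edgeFinset.Nonempty := card_pos.mp (by omega)
    induction e using Sym2.ind with | h u v => ?_
    have hcard : #(G.deleteEdges {s(u, v)}).edgeFinset = n := by
      have : (G.deleteEdges {s(u, v)}).edgeFinset = G.edgeFinset.erase s(u, v) := by
        ext; simp [and_comm]
      rw [this, card_erase_of_mem he, hn, Nat.add_sub_cancel]
    have := ih (by convert hcard)
    have := G.card_connectedComponent_deleteEdges_le u v
    omega

lemma card_add_one_le_card_connectedComponent {s : Finset V} {u : V} (hu : u ∉ s)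
    (hs : ∀ v ∈ s, G.degree v = 0) : #s + 1 ≤ Nat.card G.ConnectedComponent := by
  have hinj : Set.InjOn G.connectedComponentMk (insert u s : Finset V) := by
    intro x hx y hy hxy
    by_contra hne
    have hr := ConnectedComponent.exact hxy
    rcases mem_insert.mp hx with rfl | hx
    · rcases mem_insert.mp hy with rfl | hy
      · exact hne rfl
      · exact (hs y hy ▸ hr.degree_pos_right hne).false
    · exact (hs x hx ▸ hr.degree_pos_left hne).false
  have := card_le_card_of_injOn (t := univ) _ (fun _ _ => mem_univ _) hinj
  rwa [card_insert_of_notMem hu, card_univ, ← Nat.card_eq_fintype_card] at this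

end Fintype

namespace ConnectedComponent

def cardInter (C : G.ConnectedComponent) (s : Finset V) : ℕ :=
  #{v ∈ s | G.connectedComponentMk v = C}

lemma cardInter_le (C : G.ConnectedComponent) (s : Finset V) : C.cardInter s ≤ #s :=
  card_filter_le _ _

lemma cardInter_connectedComponentMk_pos {s : Finset V} {v : V} (hv : v ∈ s) :
    0 < (G.connectedComponentMk v).cardInter s :=
  card_pos.mpr ⟨v, mem_filter.mpr ⟨hv, rfl⟩⟩

variable [Fintype V]

lemma one_le_cardInter_univ (C : G.ConnectedComponent) : 1 ≤ C.cardInter univ := by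
  induction C using ConnectedComponent.ind with
  | h v => exact cardInter_connectedComponentMk_pos (mem_univ v)

variable [DecidableEq V]

lemma cardInter_univ (C : G.ConnectedComponent) (s : Finset V) :
    C.cardInter univ = C.cardInter s + C.cardInter sᶜ := by
  rw [cardInter, cardInter, cardInter,
    ← card_union_of_disjoint (disjoint_filter_filter disjoint_compl_right), ← filter_union,
    union_compl]

lemma sum_cardInter (s : Finset V) : ∑ C : G.ConnectedComponent, C.cardInter s = #s :=
  (card_eq_sum_card_fiberwise fun _ _ => mem_univ _).symm

lemma sum_cardInter_univ_sub_one :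
    ∑ C : G.ConnectedComponent, ((C.cardInter univ : ℝ) - 1) =
      Fintype.card V - Nat.card G.ConnectedComponent := by
  rw [sum_sub_distrib, ← Nat.cast_sum, sum_cardInter, card_univ, sum_const, card_univ,
    Nat.card_eq_fintype_card, nsmul_one]

lemma connectedComponentMk_mem_filter_cardInter_ne_zero {s : Finset V} {v : V} (hv : v ∈ s) :
    G.connectedComponentMk v ∈ ({C | C.cardInter s ≠ 0} : Finset G.ConnectedComponent) :=
  mem_filter.mpr ⟨mem_univ _, (cardInter_connectedComponentMk_pos hv).ne'⟩

lemma one_le_card_filter_cardInter_ne_zero {s : Finset V} {v : V} (hv : v ∈ s) :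
    1 ≤ #{C : G.ConnectedComponent | C.cardInter s ≠ 0} :=
  card_pos.mpr ⟨_, connectedComponentMk_mem_filter_cardInter_ne_zero hv⟩

lemma two_le_card_filter_cardInter_ne_zero {s : Finset V} {v w : V} (hv : v ∈ s) (hw : w ∈ s)
    (hvw : ¬ G.Reachable v w) : 2 ≤ #{C : G.ConnectedComponent | C.cardInter s ≠ 0} :=
  one_lt_card.mpr ⟨_, connectedComponentMk_mem_filter_cardInter_ne_zero hv, _,
    connectedComponentMk_mem_filter_cardInter_ne_zero hw, fun h => hvw (ConnectedComponent.exact h)⟩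

lemma sum_sum_reachable (f : V → ℝ) :
    ∑ i, ∑ j ∈ {j | j ≠ i ∧ G.Reachable i j}, f j =
      ∑ C : G.ConnectedComponent,
        ((C.cardInter univ : ℝ) - 1) * ∑ j ∈ {j | G.connectedComponentMk j = C}, f j := by
  have hR (i : V) : ({j | j ≠ i ∧ G.Reachable i j} : Finset V) =
      ({j | G.connectedComponentMk j = G.connectedComponentMk i} : Finset V).erase i := by
    ext j
    simp [ConnectedComponent.eq, reachable_comm]
  rw [sum_congr rfl fun i _ => by rw [hR, sum_erase_eq_sub (by simp)],
    ← sum_fiberwise univ G.connectedComponentMk]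
  refine sum_congr rfl fun C _ => ?_
  rw [sum_congr rfl fun i hi => by rw [(mem_filter.mp hi).2], sum_sub_distrib, sum_const,
    nsmul_eq_mul, cardInter]
  ring

lemma sum_ite_cardInter_le_sum_degree (s : Finset V) :
    ∑ C : G.ConnectedComponent, (if 2 ≤ C.cardInter univ then C.cardInter s else 0) ≤
      ∑ j ∈ s, G.degree j := by
  have hfib := sum_fiberwise' s G.connectedComponentMk
    fun C => if 2 ≤ C.cardInter univ then 1 else 0
  simp only [sum_const, smul_eq_mul, mul_ite, mul_one, mul_zero] at hfib
  refine hfib.trans_le (sum_le_sum fun j _ => ?_)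
  split_ifs with h2
  · obtain ⟨j', hj', hne⟩ := exists_mem_ne (lt_of_lt_of_le one_lt_two h2) j
    exact (ConnectedComponent.exact (mem_filter.mp hj').2.symm).degree_pos_left hne.symm
  · exact Nat.zero_le _

end ConnectedComponent

end SimpleGraph

lemma Finset.sum_sq_add_card_mul_sum_le {ι : Type*} [DecidableEq ι] (s : Finset ι) (a : ι → ℕ)
    (ha : ∀ i ∈ s, 1 ≤ a i) :
    ∑ i ∈ s, a i ^ 2 + #s * ∑ i ∈ s, a i ≤ (∑ i ∈ s, a i) ^ 2 + ∑ i ∈ s, a i := by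
  have hle (i : ι) (hi : i ∈ s) : a i + #s ≤ ∑ j ∈ s, a j + 1 := by
    have h1 : #(s.erase i) • 1 ≤ ∑ j ∈ s.erase i, a j :=
      card_nsmul_le_sum _ _ 1 fun j hj => ha j (mem_of_mem_erase hj)
    have h2 : ∑ j ∈ s.erase i, a j + a i = ∑ j ∈ s, a j := sum_erase_add s a hi
    rw [smul_eq_mul, mul_one, card_erase_of_mem hi] at h1
    omega
  calc ∑ i ∈ s, a i ^ 2 + #s * ∑ i ∈ s, a i = ∑ i ∈ s, a i * (a i + #s) := by
        rw [mul_sum, ← sum_add_distrib]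
        exact sum_congr rfl fun i _ => by ring
    _ ≤ ∑ i ∈ s, a i * (∑ j ∈ s, a j + 1) :=
        sum_le_sum fun i hi => Nat.mul_le_mul_left _ (hle i hi)
    _ = (∑ i ∈ s, a i) ^ 2 + ∑ i ∈ s, a i := by rw [← sum_mul]; ring

section TwoStepPayoff

open SimpleGraph

variable {I : Type*} [Fintype I] [DecidableEq I] (f : I → ℝ) (c δ : ℝ) (g : SimpleGraph I)

/-- The total payoff if every indirect connection were at distance two. -/
def twoStepPayoff : ℝ :=
  δ * ∑ i, ∑ j ∈ {j | j ≠ i ∧ g.Reachable i j}, f j + ∑ j, ((1 - δ) * f j - c) * g.degree j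

variable {f c δ g}

lemma twoStepPayoff_eq_sum :
    twoStepPayoff f c δ g = ∑ i, ((∑ j ∈ {j | j ≠ i ∧ g.Reachable i j},
      (if g.Adj i j then 1 else δ) * f j) - g.degree i * c) := by
  have hsplit (i : I) : ∑ j ∈ {j | j ≠ i ∧ g.Reachable i j}, (if g.Adj i j then 1 else δ) * f j =
      δ * ∑ j ∈ {j | j ≠ i ∧ g.Reachable i j}, f j + ∑ j ∈ g.neighborFinset i, (1 - δ) * f j := by
    have hN : g.neighborFinset i = ({j | j ≠ i ∧ g.Reachable i j} : Finset I).filter (g.Adj i) := by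
      ext j
      simpa using fun h : g.Adj i j => ⟨h.ne', h.reachable⟩
    rw [hN, sum_filter (g.Adj i), mul_sum, ← sum_add_distrib]
    refine sum_congr rfl fun j _ => ?_
    split_ifs <;> ring
  have hdeg := g.sum_sum_neighborFinset fun j => (1 - δ) * f j
  simp only [hsplit, sum_sub_distrib, sum_add_distrib, hdeg]
  rw [← mul_sum, add_sub_assoc, ← sum_sub_distrib, twoStepPayoff]
  simp only [sub_mul, mul_comm c]

lemma totalPayoff_eq_sum :
    totalPayoff f c δ g = ∑ i, ((∑ j ∈ {j | j ≠ i ∧ g.Reachable i j},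
      δ ^ (g.dist i j - 1) * f j) - g.degree i * c) := by
  simp [totalPayoff, payoff, ← card_neighborFinset_eq_degree, neighborFinset_eq_filter]

lemma totalPayoff_le_twoStepPayoff (hf : ∀ j, 0 ≤ f j) (hδ0 : 0 ≤ δ) (hδ1 : δ ≤ 1) :
    totalPayoff f c δ g ≤ twoStepPayoff f c δ g := by
  rw [totalPayoff_eq_sum, twoStepPayoff_eq_sum]
  refine sum_le_sum fun i _ => sub_le_sub_right (sum_le_sum fun j hj => ?_) _
  simp only [mem_filter] at hj
  exact mul_le_mul_of_nonneg_right (pow_dist_sub_one_le hδ0 hδ1 hj.2.2 hj.2.1) (hf j)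

lemma totalPayoff_lt_twoStepPayoff (hf : ∀ j, 0 < f j) (hδ0 : 0 < δ) (hδ1 : δ < 1) {i₀ j₀ : I}
    (hr : g.Reachable i₀ j₀) (hd : 2 < g.dist i₀ j₀) :
    totalPayoff f c δ g < twoStepPayoff f c δ g := by
  have hle (i j : I) (hj : j ∈ ({j | j ≠ i ∧ g.Reachable i j} : Finset I)) :
      δ ^ (g.dist i j - 1) * f j ≤ (if g.Adj i j then 1 else δ) * f j := by
    simp only [mem_filter] at hj
    exact mul_le_mul_of_nonneg_right (pow_dist_sub_one_le hδ0.le hδ1.le hj.2.2 hj.2.1) (hf j).le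
  have hj₀ : j₀ ∈ ({j | j ≠ i₀ ∧ g.Reachable i₀ j} : Finset I) := by
    simpa using ⟨fun h => by simp [h] at hd, hr⟩
  rw [totalPayoff_eq_sum, twoStepPayoff_eq_sum]
  refine sum_lt_sum (fun i _ => sub_le_sub_right (sum_le_sum (hle i)) _)
    ⟨i₀, mem_univ _, sub_lt_sub_right (sum_lt_sum (hle i₀) ⟨j₀, hj₀, ?_⟩) _⟩
  exact mul_lt_mul_of_pos_right (pow_dist_sub_one_lt hδ0 hδ1 hd) (hf j₀)

lemma totalPayoff_eq_twoStepPayoff (hd : ∀ i j, g.Reachable i j → g.dist i j ≤ 2) :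
    totalPayoff f c δ g = twoStepPayoff f c δ g := by
  rw [totalPayoff_eq_sum, twoStepPayoff_eq_sum]
  refine sum_congr rfl fun i _ => congrArg (· - _) (sum_congr rfl fun j hj => ?_)
  simp only [mem_filter] at hj
  rw [pow_dist_sub_one_eq hj.2.2 hj.2.1 (hd i j hj.2.2)]

end TwoStepPayoff

section Arithmetic

variable {fα fβ c δ : ℝ}

def starValue (fα c δ : ℝ) (n : ℕ) : ℝ :=
  (n - 1) * (δ * n * fα + 2 * ((1 - δ) * fα - c))

lemma sum_starValue_add_le {ι : Type*} [DecidableEq ι] (s : Finset ι) (a : ι → ℕ)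
    (ha : ∀ i ∈ s, 1 ≤ a i) (hδfα : 0 ≤ δ * fα) :
    ∑ i ∈ s, starValue fα c δ (a i) +
        (#s - 1) * (δ * (∑ i ∈ s, a i : ℕ) * fα + 2 * ((1 - δ) * fα - c)) ≤
      starValue fα c δ (∑ i ∈ s, a i) := by
  have key : ((∑ i ∈ s, a i ^ 2 + #s * ∑ i ∈ s, a i : ℕ) : ℝ) ≤
      ((∑ i ∈ s, a i) ^ 2 + ∑ i ∈ s, a i : ℕ) := by
    exact_mod_cast s.sum_sq_add_card_mul_sum_le a ha
  have hsum : ∑ i ∈ s, starValue fα c δ (a i) =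
      δ * fα * (∑ i ∈ s, (a i : ℝ) ^ 2 - ∑ i ∈ s, (a i : ℝ)) +
        2 * ((1 - δ) * fα - c) * (∑ i ∈ s, (a i : ℝ) - #s) := by
    rw [show (#s : ℝ) = ∑ i ∈ s, (1 : ℝ) by simp, ← sum_sub_distrib, ← sum_sub_distrib, mul_sum,
      mul_sum, ← sum_add_distrib]
    exact sum_congr rfl fun i _ => by rw [starValue]; ring
  rw [hsum, starValue]
  push_cast at key ⊢
  nlinarith [mul_le_mul_of_nonneg_left key hδfα]

/-- Bound for the payoff within a component of `a` type-α and `b` type-β agents: `δ f` for every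
ordered pair, and for each of the at least `a + b - 1` links the surplus `2 ((1 - δ) fα - c)` of a
link between type-α agents, less `(1 - δ) (fα - fβ)` for each type-β agent with a link. -/
def componentBound (fα fβ c δ : ℝ) (a b : ℕ) : ℝ :=
  (a + b - 1 : ℝ) * (δ * (a * fα + b * fβ) + 2 * ((1 - δ) * fα - c)) +
    if 2 ≤ a + b then (1 - δ) * (fβ - fα) * b else 0

lemma componentBound_eq_starValue_add {a b : ℕ} (h : 2 ≤ a + b) :
    componentBound fα fβ c δ a b = starValue fα c δ a +
      b * (fα + fβ - 2 * c + δ * (a - 1) * fα + δ * (a + b - 2) * fβ) := by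
  rw [componentBound, if_pos h, starValue]
  ring

variable {nα nβ : ℕ}

lemma componentBound_lt_ite (hfβ : 0 ≤ fβ) (hfαβ : fβ ≤ fα) (hδ0 : 0 ≤ δ) (hδ1 : δ ≤ 1)
    (hnα : 1 ≤ nα) (h2 : (1 + δ * (nα - 1)) * fα + (1 + δ * (nα + nβ - 2)) * fβ < 2 * c)
    {a b : ℕ} (ha : a ≤ nα) (hb : b ≤ nβ) (hb1 : 1 ≤ b) (hab : 2 ≤ a + b) :
    componentBound fα fβ c δ a b < if a = 0 then 0 else starValue fα c δ a := by
  have hb' : (b : ℝ) ≤ nβ := by exact_mod_cast hb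
  have hb1' : (1 : ℝ) ≤ b := by exact_mod_cast hb1
  split_ifs with ha0
  · subst ha0
    -- `componentBound 0 b ≤ componentBound 1 (b - 1) = (b - 1) * B` with `B < 0` below
    have hb2 : (2 : ℝ) ≤ b := by exact_mod_cast (by omega : 2 ≤ b)
    have hnα : (1 : ℝ) ≤ nα := by exact_mod_cast hnα
    have hB : fα + fβ - 2 * c + δ * (b - 2) * fβ < 0 := by
      nlinarith [mul_nonneg hδ0 (mul_nonneg (sub_nonneg.mpr hnα) (hfβ.trans hfαβ)),
        mul_nonneg hδ0 (mul_nonneg (by linarith : (0 : ℝ) ≤ nα + nβ - b) hfβ)]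
    rw [componentBound, if_pos hab]
    push_cast
    nlinarith [mul_neg_of_pos_of_neg (by linarith : (0 : ℝ) < b - 1) hB,
      mul_nonneg (mul_nonneg (by linarith : (0 : ℝ) ≤ b - 1) hδ0) (sub_nonneg.mpr hfαβ),
      mul_nonneg (sub_nonneg.mpr hδ1) (sub_nonneg.mpr hfαβ)]
  · have ha' : (a : ℝ) ≤ nα := by exact_mod_cast ha
    have ha1 : (1 : ℝ) ≤ a := by exact_mod_cast Nat.one_le_iff_ne_zero.mpr ha0
    have hB : fα + fβ - 2 * c + δ * (a - 1) * fα + δ * (a + b - 2) * fβ < 0 := by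
      nlinarith [mul_nonneg hδ0 (mul_nonneg (sub_nonneg.mpr ha') (hfβ.trans hfαβ)),
        mul_nonneg hδ0 (mul_nonneg (by linarith : (0 : ℝ) ≤ nα + nβ - (a + b)) hfβ)]
    rw [componentBound_eq_starValue_add hab]
    nlinarith [mul_neg_of_pos_of_neg (by linarith : (0 : ℝ) < b) hB]

lemma componentBound_le_ite (hfβ : 0 ≤ fβ) (hfαβ : fβ ≤ fα) (hδ0 : 0 ≤ δ) (hδ1 : δ ≤ 1)
    (hnα : 1 ≤ nα) (h2 : (1 + δ * (nα - 1)) * fα + (1 + δ * (nα + nβ - 2)) * fβ < 2 * c)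
    {a b : ℕ} (ha : a ≤ nα) (hb : b ≤ nβ) (hab : 1 ≤ a + b) :
    componentBound fα fβ c δ a b ≤ if a = 0 then 0 else starValue fα c δ a := by
  rcases Nat.lt_or_ge (a + b) 2 with hab2 | hab2
  · have hab1 : (a : ℝ) + b - 1 = 0 := by
      rw [sub_eq_zero]; exact_mod_cast (by omega : a + b = 1)
    rw [componentBound, if_neg (by omega), hab1]
    split_ifs with ha0
    · simp
    · simp [starValue, show a = 1 by omega]
  rcases Nat.eq_zero_or_pos b with rfl | hb1
  · rw [componentBound_eq_starValue_add hab2, if_neg (by omega)]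
    simp
  · exact (componentBound_lt_ite hfβ hfαβ hδ0 hδ1 hnα h2 ha hb hb1 hab2).le

end Arithmetic

section TwoTypes

open SimpleGraph ConnectedComponent

variable {I : Type*} [DecidableEq I] {A : Finset I} {fα fβ c δ : ℝ}

lemma fTheta_nonneg (hfβ : 0 ≤ fβ) (hfαβ : fβ ≤ fα) (j : I) : 0 ≤ fTheta A fα fβ j := by
  unfold fTheta; split_ifs <;> linarith

lemma fTheta_pos (hfβ : 0 < fβ) (hfαβ : fβ ≤ fα) (j : I) : 0 < fTheta A fα fβ j := by
  unfold fTheta; split_ifs <;> linarith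

variable [Fintype I] {g : SimpleGraph I}

lemma sum_fTheta_component (C : g.ConnectedComponent) :
    ∑ j ∈ {j | g.connectedComponentMk j = C}, fTheta A fα fβ j =
      C.cardInter A * fα + C.cardInter Aᶜ * fβ := by
  rw [← sum_filter_add_sum_filter_not _ (· ∈ A)]
  simp only [filter_filter, cardInter]
  rw [sum_congr rfl fun j hj => show fTheta A fα fβ j = fα from if_pos (mem_filter.mp hj).2.2,
    sum_congr rfl fun j hj => show fTheta A fα fβ j = fβ from if_neg (mem_filter.mp hj).2.2,
    sum_const, sum_const, nsmul_eq_mul, nsmul_eq_mul]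
  congr 4 <;> ext j <;> simp [and_comm]

lemma sum_fTheta_mul_degree_le (hfαβ : fβ ≤ fα) (hδ1 : δ ≤ 1) :
    ∑ j, ((1 - δ) * fTheta A fα fβ j - c) * g.degree j ≤
      2 * ((1 - δ) * fα - c) * #g.edgeFinset + (1 - δ) * (fβ - fα) *
        ∑ C : g.ConnectedComponent, (if 2 ≤ C.cardInter univ then C.cardInter Aᶜ else 0 : ℕ) := by
  have hsplit : ∑ j, ((1 - δ) * fTheta A fα fβ j - c) * g.degree j =
      ((1 - δ) * fα - c) * ∑ j, (g.degree j : ℝ) +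
        (1 - δ) * (fβ - fα) * ∑ j ∈ Aᶜ, (g.degree j : ℝ) := by
    rw [mul_sum, mul_sum, ← sum_add_sum_compl A fun j => ((1 - δ) * fα - c) * (g.degree j : ℝ),
      ← sum_add_sum_compl A, add_assoc, ← sum_add_distrib]
    congr 1
    · exact sum_congr rfl fun j hj => by rw [fTheta, if_pos hj]
    · exact sum_congr rfl fun j hj => by rw [fTheta, if_neg (mem_compl.mp hj)]; ring
  have hβ : ((∑ C : g.ConnectedComponent,
      (if 2 ≤ C.cardInter univ then C.cardInter Aᶜ else 0 : ℕ) : ℕ) : ℝ) ≤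
      ∑ j ∈ Aᶜ, (g.degree j : ℝ) := by
    exact_mod_cast sum_ite_cardInter_le_sum_degree Aᶜ
  rw [hsplit, ← Nat.cast_sum, sum_degrees_eq_twice_card_edges]
  push_cast at hβ ⊢
  nlinarith [mul_le_mul_of_nonpos_left hβ (mul_nonpos_of_nonneg_of_nonpos (sub_nonneg.mpr hδ1)
    (sub_nonpos.mpr hfαβ))]

lemma twoStepPayoff_fTheta_le (hfαβ : fβ ≤ fα) (hδ1 : δ ≤ 1) :
    twoStepPayoff (fTheta A fα fβ) c δ g ≤
      ∑ C : g.ConnectedComponent, componentBound fα fβ c δ (C.cardInter A) (C.cardInter Aᶜ) +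
        2 * ((1 - δ) * fα - c) *
          (#g.edgeFinset + Nat.card g.ConnectedComponent - Fintype.card I) := by
  have hcomp (C : g.ConnectedComponent) :
      componentBound fα fβ c δ (C.cardInter A) (C.cardInter Aᶜ) =
        δ * (((C.cardInter univ : ℝ) - 1) *
          ∑ j ∈ {j | g.connectedComponentMk j = C}, fTheta A fα fβ j) +
        2 * ((1 - δ) * fα - c) * ((C.cardInter univ : ℝ) - 1) +
        (1 - δ) * (fβ - fα) * ((if 2 ≤ C.cardInter univ then C.cardInter Aᶜ else 0 : ℕ) : ℝ) := by
    rw [componentBound, sum_fTheta_component, cardInter_univ C A]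
    push_cast
    split_ifs <;> ring
  have hk := sum_cardInter_univ_sub_one (G := g)
  have hdeg := sum_fTheta_mul_degree_le (A := A) (g := g) (c := c) hfαβ hδ1
  simp only [sum_congr rfl fun C _ => hcomp C, sum_add_distrib, ← mul_sum, hk]
  rw [twoStepPayoff, sum_sum_reachable]
  push_cast at hdeg ⊢
  linarith

lemma sum_componentBound_le (hfβ : 0 ≤ fβ) (hfαβ : fβ ≤ fα) (hδ0 : 0 ≤ δ) (hδ1 : δ ≤ 1)
    (hA : 1 ≤ #A) (h2 : (1 + δ * (#A - 1)) * fα + (1 + δ * (#A + #Aᶜ - 2)) * fβ < 2 * c) :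
    ∑ C : g.ConnectedComponent, componentBound fα fβ c δ (C.cardInter A) (C.cardInter Aᶜ) ≤
      ∑ C : g.ConnectedComponent,
        if C.cardInter A = 0 then 0 else starValue fα c δ (C.cardInter A) :=
  sum_le_sum fun C _ => componentBound_le_ite hfβ hfαβ hδ0 hδ1 hA h2 (cardInter_le C A)
    (cardInter_le C Aᶜ) (cardInter_univ C A ▸ one_le_cardInter_univ C)

lemma sum_componentBound_lt (hfβ : 0 ≤ fβ) (hfαβ : fβ ≤ fα) (hδ0 : 0 ≤ δ) (hδ1 : δ ≤ 1)
    (hA : 1 ≤ #A) (h2 : (1 + δ * (#A - 1)) * fα + (1 + δ * (#A + #Aᶜ - 2)) * fβ < 2 * c)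
    {j : I} (hj : j ∉ A) (hdeg : 0 < g.degree j) :
    ∑ C : g.ConnectedComponent, componentBound fα fβ c δ (C.cardInter A) (C.cardInter Aᶜ) <
      ∑ C : g.ConnectedComponent,
        if C.cardInter A = 0 then 0 else starValue fα c δ (C.cardInter A) := by
  obtain ⟨w, hw⟩ := (degree_pos_iff_exists_adj g j).mp hdeg
  have hk : 2 ≤ (g.connectedComponentMk j).cardInter univ := by
    refine le_trans ?_ (card_le_card (s := {j, w}) ?_)
    · rw [card_pair hw.ne]
    · intro x hx
      rcases mem_insert.mp hx with rfl | hx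
      · simp
      · simpa [mem_singleton.mp hx] using ConnectedComponent.sound hw.symm.reachable
  refine sum_lt_sum (fun C _ => componentBound_le_ite hfβ hfαβ hδ0 hδ1 hA h2 (cardInter_le C A)
    (cardInter_le C Aᶜ) (cardInter_univ C A ▸ one_le_cardInter_univ C))
    ⟨g.connectedComponentMk j, mem_univ _, componentBound_lt_ite hfβ hfαβ hδ0 hδ1 hA h2
      (cardInter_le _ A) (cardInter_le _ Aᶜ) (cardInter_connectedComponentMk_pos (mem_compl.mpr hj))
      (cardInter_univ _ A ▸ hk)⟩

lemma sum_ite_starValue_add_le (hδfα : 0 ≤ δ * fα) :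
    (∑ C : g.ConnectedComponent,
        if C.cardInter A = 0 then 0 else starValue fα c δ (C.cardInter A)) +
      (#{C : g.ConnectedComponent | C.cardInter A ≠ 0} - 1) *
        (δ * #A * fα + 2 * ((1 - δ) * fα - c)) ≤ starValue fα c δ #A := by
  have hsum : ∑ C ∈ {C : g.ConnectedComponent | C.cardInter A ≠ 0}, C.cardInter A = #A := by
    rw [sum_filter_ne_zero, sum_cardInter]
  have := sum_starValue_add_le (fα := fα) (c := c) {C : g.ConnectedComponent | C.cardInter A ≠ 0}
    (fun C => C.cardInter A) (fun C hC => Nat.one_le_iff_ne_zero.mpr (mem_filter.mp hC).2) hδfα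
  simp only [hsum] at this
  simpa only [sum_filter, ite_not] using this

lemma totalPayoff_le_sum_componentBound (hfβ : 0 ≤ fβ) (hfαβ : fβ ≤ fα) (hδ0 : 0 ≤ δ)
    (hδ1 : δ ≤ 1) :
    totalPayoff (fTheta A fα fβ) c δ g ≤
      ∑ C : g.ConnectedComponent, componentBound fα fβ c δ (C.cardInter A) (C.cardInter Aᶜ) +
        2 * ((1 - δ) * fα - c) *
          (#g.edgeFinset + Nat.card g.ConnectedComponent - Fintype.card I) :=
  (totalPayoff_le_twoStepPayoff (fTheta_nonneg hfβ hfαβ) hδ0 hδ1).trans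
    (twoStepPayoff_fTheta_le hfαβ hδ1)

lemma sum_componentBound_add_le_starValue (hfβ : 0 ≤ fβ) (hfαβ : fβ ≤ fα) (hδ0 : 0 ≤ δ)
    (hδ1 : δ ≤ 1) (hA : 1 ≤ #A)
    (h2 : (1 + δ * (#A - 1)) * fα + (1 + δ * (#A + #Aᶜ - 2)) * fβ < 2 * c) :
    ∑ C : g.ConnectedComponent, componentBound fα fβ c δ (C.cardInter A) (C.cardInter Aᶜ) +
      (#{C : g.ConnectedComponent | C.cardInter A ≠ 0} - 1) *
        (δ * #A * fα + 2 * ((1 - δ) * fα - c)) ≤ starValue fα c δ #A := by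
  linarith [sum_componentBound_le (g := g) hfβ hfαβ hδ0 hδ1 hA h2,
    sum_ite_starValue_add_le (g := g) (A := A) (c := c) (mul_nonneg hδ0 (hfβ.trans hfαβ))]

lemma totalPayoff_le_starValue (hfβ : 0 ≤ fβ) (hfαβ : fβ ≤ fα) (hδ0 : 0 ≤ δ) (hδ1 : δ ≤ 1)
    (hA : A.Nonempty) (h1 : (1 - δ) * fα ≤ c)
    (h2 : (1 + δ * (#A - 1)) * fα + (1 + δ * (#A + #Aᶜ - 2)) * fβ < 2 * c)
    (h3 : 2 * c ≤ fα * (2 + δ * (#A - 2))) :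
    totalPayoff (fTheta A fα fβ) c δ g ≤ starValue fα c δ #A := by
  obtain ⟨i, hi⟩ := hA
  have hchain := totalPayoff_le_sum_componentBound (c := c) (g := g) (A := A) hfβ hfαβ hδ0 hδ1
  have hstar := sum_componentBound_add_le_starValue (g := g) hfβ hfαβ hδ0 hδ1
    (card_pos.mpr ⟨i, hi⟩) h2
  have hE : (Fintype.card I : ℝ) ≤ #g.edgeFinset + Nat.card g.ConnectedComponent := by
    exact_mod_cast card_le_card_edgeFinset_add_card_connectedComponent
  have hR : (1 : ℝ) ≤ #{C : g.ConnectedComponent | C.cardInter A ≠ 0} := by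
    exact_mod_cast one_le_card_filter_cardInter_ne_zero hi
  have hσ : 2 * ((1 - δ) * fα - c) ≤ 0 := by linarith
  have hX : 0 ≤ δ * #A * fα + 2 * ((1 - δ) * fα - c) := by linarith
  nlinarith [mul_nonneg (sub_nonneg.mpr hR) hX,
    mul_nonpos_of_nonpos_of_nonneg hσ (sub_nonneg.mpr hE)]

lemma totalPayoff_lt_starValue (hfβ : 0 < fβ) (hfαβ : fβ ≤ fα) (hδ0 : 0 < δ) (hδ1 : δ < 1)
    (hA : A.Nonempty) (h1 : (1 - δ) * fα < c)
    (h2 : (1 + δ * (#A - 1)) * fα + (1 + δ * (#A + #Aᶜ - 2)) * fβ < 2 * c)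
    (h3 : 2 * c < fα * (2 + δ * (#A - 2)))
    (h : Fintype.card I < #g.edgeFinset + Nat.card g.ConnectedComponent ∨
      (∃ i ∈ A, ∃ j ∈ A, ¬ g.Reachable i j) ∨ (∃ j ∉ A, 0 < g.degree j) ∨
      ∃ i j, g.Reachable i j ∧ 2 < g.dist i j) :
    totalPayoff (fTheta A fα fβ) c δ g < starValue fα c δ #A := by
  obtain ⟨i, hi⟩ := hA
  have hA1 : 1 ≤ #A := card_pos.mpr ⟨i, hi⟩
  have hchain := totalPayoff_le_sum_componentBound (c := c) (g := g) (A := A) hfβ.le hfαβ hδ0.le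
    hδ1.le
  have hstar := sum_componentBound_add_le_starValue (g := g) hfβ.le hfαβ hδ0.le hδ1.le hA1 h2
  have hE : (Fintype.card I : ℝ) ≤ #g.edgeFinset + Nat.card g.ConnectedComponent := by
    exact_mod_cast card_le_card_edgeFinset_add_card_connectedComponent
  have hR : (1 : ℝ) ≤ #{C : g.ConnectedComponent | C.cardInter A ≠ 0} := by
    exact_mod_cast one_le_card_filter_cardInter_ne_zero hi
  have hσ : 2 * ((1 - δ) * fα - c) < 0 := by linarith
  have hX : 0 < δ * #A * fα + 2 * ((1 - δ) * fα - c) := by linarith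
  have hslackE := mul_nonpos_of_nonpos_of_nonneg hσ.le (sub_nonneg.mpr hE)
  have hslackR := mul_nonneg (sub_nonneg.mpr hR) hX.le
  rcases h with hcyc | ⟨i, hi, j, hj, hij⟩ | ⟨j, hj, hdeg⟩ | ⟨i, j, hr, hd⟩
  · have hcyc : (Fintype.card I : ℝ) + 1 ≤ #g.edgeFinset + Nat.card g.ConnectedComponent := by
      exact_mod_cast hcyc
    nlinarith
  · have hR2 : (2 : ℝ) ≤ #{C : g.ConnectedComponent | C.cardInter A ≠ 0} := by
      exact_mod_cast two_le_card_filter_cardInter_ne_zero hi hj hij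
    nlinarith
  · have hlt := sum_componentBound_lt (c := c) hfβ.le hfαβ hδ0.le hδ1.le hA1 h2 hj hdeg
    have := sum_ite_starValue_add_le (g := g) (A := A) (c := c)
      (mul_nonneg hδ0.le (hfβ.trans_le hfαβ).le)
    linarith
  · have hlt := totalPayoff_lt_twoStepPayoff (c := c) (fTheta_pos (A := A) hfβ hfαβ) hδ0 hδ1 hr hd
    have := twoStepPayoff_fTheta_le (A := A) (c := c) (g := g) hfαβ hδ1.le
    linarith

end TwoTypes

section Star

open SimpleGraph

variable {I : Type*} {A : Finset I} {v : I}

lemma starOn_reachable (hv : v ∈ A) {i j : I} :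
    (starOn A v).Reachable i j ↔ i = j ∨ i ∈ A ∧ j ∈ A := by
  have hadj {a b : I} (ha : a ∈ A) (hb : b ∈ A) (hab : a ≠ b) (h : a = v ∨ b = v) :
      (starOn A v).Adj a b := ⟨hab, h, ha, hb⟩
  constructor
  · intro h
    obtain ⟨w⟩ := h
    induction w with
    | nil => exact .inl rfl
    | cons h _ ih => exact .inr ⟨h.2.2.1, ih.elim (· ▸ h.2.2.2) And.right⟩
  · rintro (rfl | ⟨hi, hj⟩)
    · rfl
    by_cases hiv : i = v
    · by_cases hij : i = j
      · exact hij ▸ .rfl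
      exact (hadj hi hj hij (.inl hiv)).reachable
    by_cases hjv : j = v
    · exact (hadj hi hj (hjv ▸ hiv) (.inr hjv)).reachable
    exact (hadj hi hv hiv (.inr rfl)).reachable.trans
      (hadj hv hj (Ne.symm hjv) (.inl rfl)).reachable

lemma starOn_dist_le_two (hv : v ∈ A) {i j : I} (h : (starOn A v).Reachable i j) :
    (starOn A v).dist i j ≤ 2 := by
  have hle {a : I} (ha : a ∈ A) : (starOn A v).dist a v ≤ 1 := by
    by_cases hav : a = v
    · simp [hav]
    · exact (dist_eq_one_iff_adj.mpr (show (starOn A v).Adj a v from ⟨hav, .inr rfl, ha, hv⟩)).le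
  rcases (starOn_reachable hv).mp h with rfl | ⟨hi, hj⟩
  · simp
  have := ((starOn_reachable hv).mpr (.inr ⟨hi, hv⟩)).dist_triangle_left j
  rw [dist_comm (u := v)] at this
  linarith [hle hi, hle hj]

variable [Fintype I] [DecidableEq I]

lemma card_edgeFinset_starOn (hv : v ∈ A) : #(starOn A v).edgeFinset = #A - 1 := by
  have hE : (starOn A v).edgeFinset = (A.erase v).image (s(v, ·)) := by
    ext e
    induction e using Sym2.ind with
    | h a b =>
      simp only [mem_edgeFinset, mem_edgeSet, mem_image, mem_erase]
      constructor
      · rintro ⟨hab, rfl | rfl, ha, hb⟩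
        · exact ⟨b, ⟨hab.symm, hb⟩, rfl⟩
        · exact ⟨a, ⟨hab, ha⟩, Sym2.eq_swap⟩
      · rintro ⟨w, ⟨hwv, hw⟩, he⟩
        rcases Sym2.eq_iff.mp he with ⟨rfl, rfl⟩ | ⟨rfl, rfl⟩
        · exact ⟨hwv.symm, .inl rfl, hv, hw⟩
        · exact ⟨hwv, .inr rfl, hw, hv⟩
  rw [hE, card_image_of_injective _ fun _ _ h => Sym2.congr_right.mp h, card_erase_of_mem hv]

variable {fα fβ c δ : ℝ}

lemma totalPayoff_starOn (hv : v ∈ A) :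
    totalPayoff (fTheta A fα fβ) c δ (starOn A v) = starValue fα c δ #A := by
  have hR (i : I) : ({j | j ≠ i ∧ (starOn A v).Reachable i j} : Finset I) =
      if i ∈ A then A.erase i else ∅ := by
    ext j
    split_ifs with hi
    · simp only [mem_filter, mem_univ, true_and, starOn_reachable hv, hi, mem_erase]
      tauto
    · simp [starOn_reachable hv, hi, eq_comm]
  have hP : ∑ i, ∑ j ∈ {j | j ≠ i ∧ (starOn A v).Reachable i j}, fTheta A fα fβ j =
      #A * (#A - 1 : ℕ) * fα := by
    simp_rw [hR, apply_ite (fun s => ∑ j ∈ s, fTheta A fα fβ j), sum_empty]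
    have hrow (i : I) (hi : i ∈ A) : ∑ j ∈ A.erase i, fTheta A fα fβ j = (#A - 1 : ℕ) * fα := by
      rw [sum_congr rfl fun j hj => show fTheta A fα fβ j = fα from if_pos (mem_of_mem_erase hj),
        sum_const, card_erase_of_mem hi, nsmul_eq_mul]
    rw [← sum_filter, filter_mem_eq_inter, univ_inter, sum_congr rfl hrow, sum_const, nsmul_eq_mul,
      mul_assoc]
  have hdeg : ∑ j, ((1 - δ) * fTheta A fα fβ j - c) * (starOn A v).degree j =
      ((1 - δ) * fα - c) * (2 * (#A - 1 : ℕ)) := by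
    have hterm (j : I) : ((1 - δ) * fTheta A fα fβ j - c) * (starOn A v).degree j =
        ((1 - δ) * fα - c) * (starOn A v).degree j := by
      by_cases hj : j ∈ A
      · rw [fTheta, if_pos hj]
      · have : (starOn A v).degree j = 0 := card_eq_zero.mpr <|
          eq_empty_of_forall_notMem fun w hw => hj ((mem_neighborFinset _ _ _).mp hw).2.2.1
        simp [this]
    rw [sum_congr rfl fun j _ => hterm j, ← mul_sum, ← Nat.cast_sum,
      sum_degrees_eq_twice_card_edges, card_edgeFinset_starOn hv]
    push_cast
    ring
  rw [totalPayoff_eq_twoStepPayoff fun i j h => starOn_dist_le_two hv h, twoStepPayoff, hP, hdeg,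
    starValue, Nat.cast_sub (card_pos.mpr ⟨v, hv⟩)]
  ring

end Star

section StarUnique

open SimpleGraph

variable {I : Type*} [DecidableEq I]

def IsParentMap (g : SimpleGraph I) (A : Finset I) (v : I) (p : I → I) : Prop :=
  ∀ w ∈ A.erase v, g.Adj (p w) w ∧ (g.Adj v w → p w = v) ∧ (¬ g.Adj v w → g.Adj v (p w))

variable {A : Finset I} {v : I} {g : SimpleGraph I}

lemma exists_isParentMap (hv : v ∈ A)
    (hnear : ∀ i ∈ A, ∀ j ∈ A, i ≠ j → g.Adj i j ∨ ∃ z, g.Adj i z ∧ g.Adj z j) :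
    ∃ p, IsParentMap g A v p := by
  have hpar (w : I) : ∃ x, w ∈ A.erase v →
      g.Adj x w ∧ (g.Adj v w → x = v) ∧ (¬ g.Adj v w → g.Adj v x) := by
    by_cases hvw : g.Adj v w
    · exact ⟨v, fun _ => ⟨hvw, fun _ => rfl, absurd hvw⟩⟩
    by_cases hw : w ∈ A.erase v
    · obtain ⟨z, hvz, hzw⟩ :=
        (hnear v hv w (mem_erase.mp hw).2 (mem_erase.mp hw).1.symm).resolve_left hvw
      exact ⟨z, fun _ => ⟨hzw, fun h => absurd h hvw, fun _ => hvz⟩⟩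
    · exact ⟨v, fun h => absurd h hw⟩
  choose p hp using hpar
  exact ⟨p, hp⟩

lemma IsParentMap.injOn {p : I → I} (hp : IsParentMap g A v p) :
    Set.InjOn (fun w => s(p w, w)) (A.erase v) := by
  intro w hw w' hw' h
  rcases Sym2.eq_iff.mp h with ⟨-, h⟩ | ⟨h₁, h₂⟩
  · exact h
  have hvw : ¬ g.Adj v w := fun h => (mem_erase.mp hw').1 (h₁ ▸ (hp w hw).2.1 h)
  exact absurd (h₂ ▸ (hp w' hw').2.1 (h₁ ▸ (hp w hw).2.2 hvw)) (mem_erase.mp hw).1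

variable [Fintype I]

lemma IsParentMap.exists_eq_of_adj {p : I → I} (hp : IsParentMap g A v p) (hv : v ∈ A)
    (hcard : #g.edgeFinset < #A) {a b : I} (hab : g.Adj a b) :
    ∃ u ∈ A.erase v, s(p u, u) = s(a, b) := by
  have hsub : (A.erase v).image (fun w => s(p w, w)) ⊆ g.edgeFinset := by
    intro e he
    obtain ⟨w, hw, rfl⟩ := mem_image.mp he
    exact mem_edgeFinset.mpr (hp w hw).1
  have heq := eq_of_subset_of_card_le hsub (by
    rw [card_image_of_injOn hp.injOn, card_erase_of_mem hv]; omega)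
  have : s(a, b) ∈ (A.erase v).image (fun w => s(p w, w)) := heq ▸ mem_edgeFinset.mpr hab
  simpa using this

lemma IsParentMap.adj {p : I → I} (hp : IsParentMap g A v p) (hv : v ∈ A)
    (hmax : ∀ w ∈ A, g.degree w ≤ g.degree v) (hsub : ∀ ⦃i j⦄, g.Adj i j → i ∈ A)
    (hnear : ∀ i ∈ A, ∀ j ∈ A, i ≠ j → g.Adj i j ∨ ∃ z, g.Adj i z ∧ g.Adj z j)
    (hcard : #g.edgeFinset < #A) {w : I} (hw : w ∈ A.erase v) : g.Adj v w := by
  by_contra hvw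
  have hvx : g.Adj v (p w) := (hp w hw).2.2 hvw
  have honly : ∀ t, g.Adj w t → t = p w := by
    intro t hwt
    obtain ⟨u, hu, he⟩ := hp.exists_eq_of_adj hv hcard hwt
    rcases Sym2.eq_iff.mp he with ⟨hpu, rfl⟩ | ⟨rfl, rfl⟩
    · have hvu : ¬ g.Adj v u := fun h => (mem_erase.mp hw).1 (hpu ▸ (hp u hu).2.1 h)
      exact absurd (hpu ▸ (hp u hu).2.2 hvu) hvw
    · rfl
  -- `p w` has the two neighbours `v` and `w`, so `v` has a neighbour `y ≠ p w`, which is at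
  -- distance three from `w`
  have hx2 : 1 < #(g.neighborFinset v) := by
    rw [card_neighborFinset_eq_degree]
    refine lt_of_lt_of_le ?_ (hmax _ (hsub hvx.symm))
    rw [← card_neighborFinset_eq_degree, one_lt_card]
    exact ⟨v, by simpa using hvx.symm, w, by simpa using (hp w hw).1, (mem_erase.mp hw).1.symm⟩
  obtain ⟨y, hy, hyx⟩ := exists_mem_ne hx2 (p w)
  have hvy : g.Adj v y := (mem_neighborFinset _ _ _).mp hy
  rcases hnear w (mem_erase.mp hw).2 y (hsub hvy.symm) (fun h => hvw (h ▸ hvy)) with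
    hwy | ⟨z, hwz, hzy⟩
  · exact hyx (honly y hwy)
  obtain ⟨u, hu, he⟩ := hp.exists_eq_of_adj hv hcard (honly z hwz ▸ hzy)
  rcases Sym2.eq_iff.mp he with ⟨hpu, rfl⟩ | ⟨hpu, rfl⟩
  · exact hvx.ne (hpu ▸ (hp _ hu).2.1 hvy).symm
  · exact hvy.ne (hpu ▸ (hp _ hu).2.1 hvx).symm

/-- A vertex `v` of maximum degree is the centre: every other `w` is joined to `v` or to a
neighbour of `v`, these links are distinct, and since there are fewer than `|A|` links they are
all of them. -/
lemma exists_eq_starOn (hA : A.Nonempty) (hsub : ∀ ⦃i j⦄, g.Adj i j → i ∈ A)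
    (hnear : ∀ i ∈ A, ∀ j ∈ A, i ≠ j → g.Adj i j ∨ ∃ z, g.Adj i z ∧ g.Adj z j)
    (hcard : #g.edgeFinset < #A) : ∃ v ∈ A, g = starOn A v := by
  obtain ⟨v, hv, hmax⟩ := A.exists_max_image (fun i => g.degree i) hA
  obtain ⟨p, hp⟩ := exists_isParentMap hv hnear
  have hstar {w : I} (hw : w ∈ A.erase v) : g.Adj v w := hp.adj hv hmax hsub hnear hcard hw
  refine ⟨v, hv, ?_⟩
  ext a b
  refine ⟨fun hab => ⟨hab.ne, ?_, hsub hab, hsub hab.symm⟩, ?_⟩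
  · obtain ⟨u, hu, he⟩ := hp.exists_eq_of_adj hv hcard hab
    rw [(hp u hu).2.1 (hstar hu)] at he
    rcases Sym2.eq_iff.mp he with ⟨h, -⟩ | ⟨h, -⟩
    · exact .inl h.symm
    · exact .inr h.symm
  · rintro ⟨hab, rfl | rfl, ha, hb⟩
    · exact hstar (mem_erase.mpr ⟨hab.symm, hb⟩)
    · exact (hstar (mem_erase.mpr ⟨hab, ha⟩)).symm

variable {fα fβ c δ : ℝ}

lemma eq_starOn_of_starValue_le_totalPayoff (hfβ : 0 < fβ) (hfαβ : fβ ≤ fα) (hδ0 : 0 < δ)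
    (hδ1 : δ < 1) (hA : A.Nonempty) (h1 : (1 - δ) * fα < c)
    (h2 : (1 + δ * (#A - 1)) * fα + (1 + δ * (#A + #Aᶜ - 2)) * fβ < 2 * c)
    (h3 : 2 * c < fα * (2 + δ * (#A - 2)))
    (h : starValue fα c δ #A ≤ totalPayoff (fTheta A fα fβ) c δ g) :
    ∃ v ∈ A, g = starOn A v := by
  have hnot := fun hc => (totalPayoff_lt_starValue hfβ hfαβ hδ0 hδ1 hA h1 h2 h3 hc).not_ge h
  simp only [imp_false, not_or, not_exists, not_lt, not_and, not_not, nonpos_iff_eq_zero] at hnot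
  obtain ⟨hcyc, hconn, hiso, hdist⟩ := hnot
  obtain ⟨v, hv⟩ := hA
  have hsub ⦃i j : I⦄ (hij : g.Adj i j) : i ∈ A := by
    by_contra hi
    exact (hiso i hi ▸ hij.reachable.degree_pos_left hij.ne).false
  refine exists_eq_starOn ⟨v, hv⟩ hsub (fun i hi j hj hij => ?_) ?_
  · by_cases hadj : g.Adj i j
    · exact .inl hadj
    have h2' : g.edist i j = 2 := by
      rw [← (hconn i hi j hj).coe_dist_eq_edist]
      have := (hconn i hi j hj).one_lt_dist_of_ne_of_not_adj hij hadj
      have := hdist i j (hconn i hi j hj)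
      norm_cast; omega
    obtain ⟨z, hz⟩ := (edist_eq_two_iff.mp h2').2.2
    exact .inr ⟨z, (g.mem_commonNeighbors.mp hz).1, (g.mem_commonNeighbors.mp hz).2.symm⟩
  · have := card_add_one_le_card_connectedComponent (s := Aᶜ) (u := v) (G := g)
      (fun h => mem_compl.mp h hv) fun j hj => hiso j (mem_compl.mp hj)
    have := card_add_card_compl A
    omega

end StarUnique

theorem thm2f_general {I : Type*} [Fintype I] [DecidableEq I]
    (A : Finset I) (fα fβ c δ : ℝ)
    (hA : 1 ≤ A.card)
    (hfαβ : fβ < fα) (hfβ : 0 < fβ)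
    (hδ0 : 0 < δ) (hδ1 : δ < 1)
    (h1 : (1 - δ) * fα < c)
    (h2 : (1 + δ * ((A.card : ℝ) - 1)) * fα + (1 + δ * ((A.card : ℝ) + (Aᶜ.card : ℝ) - 2)) * fβ < 2 * c)
    (h3 : 2 * c < fα * (2 + δ * ((A.card : ℝ) - 2))) :
    ∀ g : SimpleGraph I,
      StronglyEfficient (fTheta A fα fβ) c δ g ↔ ∃ i₀ ∈ A, g = starOn A i₀ := by
  intro g
  obtain ⟨v, hv⟩ := card_pos.mp hA
  have hle (g' : SimpleGraph I) : totalPayoff (fTheta A fα fβ) c δ g' ≤ starValue fα c δ #A :=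
    totalPayoff_le_starValue hfβ.le hfαβ.le hδ0.le hδ1.le ⟨v, hv⟩ h1.le h2 h3.le
  constructor
  · intro heff
    exact eq_starOn_of_starValue_le_totalPayoff hfβ hfαβ.le hδ0 hδ1 ⟨v, hv⟩ h1 h2 h3
      (totalPayoff_starOn hv ▸ heff (starOn A v))
  · rintro ⟨i₀, hi₀, rfl⟩ g'
    exact (hle g').trans (totalPayoff_starOn hi₀).ge

/-- Theorem 2(f): a network is strongly efficient iff it is a star on the
type-α agents centered at some type-α agent, with every type-β agent a singleton. -/
theorem thm2f {I : Type*} [Fintype I] [DecidableEq I]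
    (A : Finset I) (fα fβ c δ : ℝ)
    (hA : 1 ≤ A.card) (hB : 1 ≤ Aᶜ.card)
    (hfαβ : fβ < fα) (hfβ : 0 < fβ) (hc : 0 < c)
    (hδ0 : 0 < δ) (hδ1 : δ < 1)
    (hA2 : 2 ≤ A.card)
    (h1 : (1 - δ) * fα < c)
    (h2 : (1 + δ * ((A.card : ℝ) - 1)) * fα + (1 + δ * ((A.card : ℝ) + (Aᶜ.card : ℝ) - 2)) * fβ < 2 * c)
    (h3 : 2 * c < fα * (2 + δ * ((A.card : ℝ) - 2))) :
    ∀ g : SimpleGraph I,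
      StronglyEfficient (fTheta A fα fβ) c δ g ↔ ∃ i₀ ∈ A, g = starOn A i₀ :=
  thm2f_general A fα fβ c δ hA hfαβ hfβ hδ0 hδ1 h1 h2 h3
end
end

section
/- Lemma 2: In the two-type connections model, every strongly efficient network has at most one non-empty component; that is, if g is strongly efficient, then all edges of g lie in a single connected component of g. -/
open Finset

noncomputable section

open scoped Classical

variable {I : Type*}

/-!
Suppose links `ij` and `kl` lie in different components, say with `f j ≤ f k`, and move every link
of `j` to `k`. Identifying `j` with `k` maps the old network homomorphically onto the new one and is
injective on links and on ordered pairs of distinct connected agents. So the link cost is unchanged,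
while every connected pair stays connected, at no greater distance, to an agent of no smaller value;
in addition `i` and `l` become connected. Hence the total payoff strictly increases.
-/

open SimpleGraph Function

lemma SimpleGraph.Reachable.dist_map_le {V W : Type*} {G : SimpleGraph V} {G' : SimpleGraph W}
    (φ : G →g G') {x y : V} (h : G.Reachable x y) : G'.dist (φ x) (φ y) ≤ G.dist x y := by
  obtain ⟨p, hp⟩ := h.exists_walk_length_eq_dist
  simpa [hp] using dist_le (p.map φ)

section Merge

variable {V : Type*}

namespace Function

lemma eq_or_eq_of_update_id_eq_update_id {u v x y : V} (h : update id v u x = update id v u y)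
    (hxy : x ≠ y) : (x = u ∨ x = v) ∧ (y = u ∨ y = v) := by
  by_cases hx : x = v <;> by_cases hy : y = v <;> simp_all

lemma eq_of_update_id_eq {u v x a : V} (h : update id v u x = a) (ha : a ≠ u) : x = a := by
  by_cases hx : x = v <;> simp_all

end Function

namespace SimpleGraph

/-- `g.merge v u` moves every link of `v` to `u`, i.e. identifies `v` with `u`. -/
def merge (g : SimpleGraph V) (v u : V) : SimpleGraph V :=
  fromRel (Relation.Map g.Adj (update id v u) (update id v u))

variable {g : SimpleGraph V} {u v : V}

lemma not_reachable_of_update_id_eq (huv : ¬ g.Reachable u v) {x y : V}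
    (h : update id v u x = update id v u y) (hxy : x ≠ y) : ¬ g.Reachable x y := by
  obtain ⟨hx | rfl, hy | rfl⟩ := eq_or_eq_of_update_id_eq_update_id h hxy <;> subst_vars
  · exact absurd rfl hxy
  · exact huv
  · exact fun h => huv h.symm
  · exact absurd rfl hxy

lemma update_id_ne_of_reachable (huv : ¬ g.Reachable u v) {x y : V} (hxy : x ≠ y)
    (h : g.Reachable x y) : update id v u x ≠ update id v u y :=
  fun he => not_reachable_of_update_id_eq huv he hxy h

/-- Identifying two vertices of different components collapses no link. -/
def mergeHom (huv : ¬ g.Reachable u v) : g →g g.merge v u where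
  toFun := update id v u
  map_rel' {x y} hxy :=
    (fromRel_adj _ _ _).2
      ⟨update_id_ne_of_reachable huv hxy.ne hxy.reachable, Or.inl ⟨x, y, hxy, rfl, rfl⟩⟩

@[simp]
lemma mergeHom_apply (huv : ¬ g.Reachable u v) (x : V) : mergeHom huv x = update id v u x := rfl

lemma exists_adj_of_merge_adj {a b : V} (h : (g.merge v u).Adj a b) :
    ∃ x y, g.Adj x y ∧ update id v u x = a ∧ update id v u y = b := by
  obtain ⟨-, ⟨x, y, hxy, rfl, rfl⟩ | ⟨x, y, hxy, rfl, rfl⟩⟩ := (fromRel_adj _ _ _).1 h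
  exacts [⟨x, y, hxy, rfl, rfl⟩, ⟨y, x, hxy.symm, rfl, rfl⟩]

lemma injOn_prodMap_update_id (huv : ¬ g.Reachable u v) :
    Set.InjOn (Prod.map (update id v u) (update id v u)) {p | p.2 ≠ p.1 ∧ g.Reachable p.1 p.2} := by
  rintro ⟨x, y⟩ ⟨hyx, hxy⟩ ⟨x', y'⟩ ⟨-, hxy'⟩ he
  obtain ⟨hx, hy⟩ := Prod.ext_iff.1 he
  simp only [Prod.map_fst, Prod.map_snd] at hx hy
  by_cases hxx' : x = x'
  · subst hxx'
    have hyy' : y = y' := by_contra fun hyy' =>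
      not_reachable_of_update_id_eq huv hy hyy' (hxy.symm.trans hxy')
    rw [hyy']
  · have hnx := not_reachable_of_update_id_eq huv hx hxx'
    have hyy' : y ≠ y' := fun h => hnx (hxy.trans (h ▸ hxy'.symm))
    -- both `{x, x'}` and `{y, y'}` are `{u, v}`, so `y = x'`
    have hyx' : y = x' := by
      have := eq_or_eq_of_update_id_eq_update_id hx hxx'
      have := eq_or_eq_of_update_id_eq_update_id hy hyy'
      grind
    exact absurd (hyx' ▸ hxy) hnx

variable [Fintype V]

lemma card_dart_merge (huv : ¬ g.Reachable u v) :
    Fintype.card (g.merge v u).Dart = Fintype.card g.Dart := by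
  refine (Fintype.card_congr (Equiv.ofBijective (mergeHom huv).mapDart ⟨?_, ?_⟩)).symm
  · intro d d' hd
    have h := congrArg Dart.toProd hd
    simp only [Hom.mapDart_apply] at h
    exact Dart.ext _ _ (injOn_prodMap_update_id huv ⟨d.adj.ne.symm, d.adj.reachable⟩
      ⟨d'.adj.ne.symm, d'.adj.reachable⟩ h)
  · rintro ⟨⟨a, b⟩, hab⟩
    obtain ⟨x, y, hxy, rfl, rfl⟩ := exists_adj_of_merge_adj hab
    exact ⟨⟨(x, y), hxy⟩, rfl⟩

end SimpleGraph

end Merge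

section Payoff

variable [Fintype I]

def reachablePairs (g : SimpleGraph I) : Finset (I × I) :=
  univ.filter fun p => p.2 ≠ p.1 ∧ g.Reachable p.1 p.2

lemma coe_reachablePairs (g : SimpleGraph I) :
    (reachablePairs g : Set (I × I)) = {p | p.2 ≠ p.1 ∧ g.Reachable p.1 p.2} := by
  simp [reachablePairs]

def benefit (f : I → ℝ) (δ : ℝ) (g : SimpleGraph I) : ℝ :=
  ∑ p ∈ reachablePairs g, δ ^ (g.dist p.1 p.2 - 1) * f p.2

lemma totalPayoff_eq_benefit_sub (f : I → ℝ) (c δ : ℝ) (g : SimpleGraph I) :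
    totalPayoff f c δ g = benefit f δ g - Fintype.card g.Dart * c := by
  have hdeg : ∀ i, #(univ.filter fun j => g.Adj i j) = g.degree i := fun i => by
    rw [← card_neighborFinset_eq_degree, neighborFinset_eq_filter]
  simp only [totalPayoff, payoff, benefit, reachablePairs, dart_card_eq_sum_degrees, hdeg,
    sum_sub_distrib, Nat.cast_sum, sum_mul, sum_filter, ← univ_product_univ, sum_product]

variable {f : I → ℝ} {δ : ℝ}

theorem benefit_lt_of_hom {g h : SimpleGraph I} (φ : g →g h)
    (hf : ∀ x, 0 < f x) (hfφ : ∀ x, f x ≤ f (φ x)) (hδ0 : 0 < δ) (hδ1 : δ ≤ 1)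
    (hinj : Set.InjOn (Prod.map φ φ) (reachablePairs g))
    (hsep : ∀ p ∈ reachablePairs g, φ p.2 ≠ φ p.1) {a b : I} (hab : (a, b) ∈ reachablePairs h)
    (hnew : (a, b) ∉ (reachablePairs g).image (Prod.map φ φ)) :
    benefit f δ g < benefit f δ h := by
  set term : I × I → ℝ := fun p => δ ^ (h.dist p.1 p.2 - 1) * f p.2
  have hterm : ∀ p, 0 < term p := fun p => mul_pos (pow_pos hδ0 _) (hf _)
  have hmaps : (reachablePairs g).image (Prod.map φ φ) ⊆ reachablePairs h := by
    simp only [subset_iff, mem_image, reachablePairs, mem_filter, mem_univ, true_and]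
    rintro _ ⟨p, hp, rfl⟩
    exact ⟨hsep p (by simpa [reachablePairs] using hp), hp.2.map φ⟩
  calc benefit f δ g ≤ ∑ p ∈ reachablePairs g, term (Prod.map φ φ p) := by
        refine sum_le_sum fun p hp => mul_le_mul ?_ (hfφ _) (hf _).le (by positivity)
        have hr : g.Reachable p.1 p.2 := (mem_filter.1 hp).2.2
        exact pow_le_pow_of_le_one hδ0.le hδ1 (Nat.sub_le_sub_right (hr.dist_map_le φ) 1)
    _ = ∑ q ∈ (reachablePairs g).image (Prod.map φ φ), term q := (sum_image hinj).symm
    _ < ∑ q ∈ insert (a, b) ((reachablePairs g).image (Prod.map φ φ)), term q := by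
        rw [sum_insert hnew]
        linarith [hterm (a, b)]
    _ ≤ benefit f δ h :=
        sum_le_sum_of_subset_of_nonneg (insert_subset hab hmaps) fun p _ _ => (hterm p).le

theorem totalPayoff_lt_totalPayoff_merge {g : SimpleGraph I} (c : ℝ)
    (hf : ∀ x, 0 < f x) (hδ0 : 0 < δ) (hδ1 : δ ≤ 1) {u v a b : I} (hau : g.Adj a u)
    (hvb : g.Adj v b) (huv : ¬ g.Reachable u v) (hfvu : f v ≤ f u) :
    totalPayoff f c δ g < totalPayoff f c δ (g.merge v u) := by
  have hav : a ≠ v := by rintro rfl; exact huv hau.reachable.symm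
  have hbu : b ≠ u := by rintro rfl; exact huv hvb.reachable.symm
  have hnab : ¬ g.Reachable a b := fun h =>
    huv (hau.reachable.symm.trans (h.trans hvb.reachable.symm))
  have hu : u ≠ v := by rintro rfl; exact huv .rfl
  have hab : (a, b) ∈ reachablePairs (g.merge v u) := by
    have h₁ := (mergeHom huv).map_adj hau
    have h₂ := (mergeHom huv).map_adj hvb
    simp only [mergeHom_apply, update_self, update_of_ne hav, update_of_ne hu,
      update_of_ne hvb.ne', id] at h₁ h₂
    simpa [reachablePairs] using ⟨fun h => hnab (h ▸ .rfl), h₁.reachable.trans h₂.reachable⟩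
  have hnew : (a, b) ∉ (reachablePairs g).image (Prod.map (mergeHom huv) (mergeHom huv)) := by
    simp only [mem_image, reachablePairs, mem_filter, mem_univ, true_and, not_exists, not_and]
    rintro ⟨x, y⟩ ⟨-, hxy⟩ he
    obtain ⟨hx, hy⟩ := Prod.ext_iff.1 he
    rw [eq_of_update_id_eq hx hau.ne, eq_of_update_id_eq hy hbu] at hxy
    exact hnab hxy
  have hfφ : ∀ x, f x ≤ f (mergeHom huv x) := by
    intro x
    by_cases hx : x = v
    · simpa [hx] using hfvu
    · simp [hx]
  have hben := benefit_lt_of_hom (mergeHom huv) hf hfφ hδ0 hδ1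
    (by rw [coe_reachablePairs]; exact injOn_prodMap_update_id huv)
    (fun p hp => by
      obtain ⟨hne, hr⟩ := by simpa [reachablePairs] using hp
      exact update_id_ne_of_reachable huv hne hr.symm) hab hnew
  rw [totalPayoff_eq_benefit_sub, totalPayoff_eq_benefit_sub, card_dart_merge huv]
  linarith

theorem StronglyEfficient.reachable_of_adj_of_adj {c : ℝ} {g : SimpleGraph I}
    (hSE : StronglyEfficient f c δ g) (hf : ∀ x, 0 < f x) (hδ0 : 0 < δ) (hδ1 : δ ≤ 1)
    {i j k l : I} (hij : g.Adj i j) (hkl : g.Adj k l) : g.Reachable i k := by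
  by_contra hik
  have hjk : ¬ g.Reachable j k := fun h => hik (hij.reachable.trans h)
  rcases le_total (f j) (f k) with hfjk | hfkj
  · exact (hSE _).not_gt <| totalPayoff_lt_totalPayoff_merge c hf hδ0 hδ1 hkl.symm hij.symm
      (fun h => hjk h.symm) hfjk
  · exact (hSE _).not_gt <| totalPayoff_lt_totalPayoff_merge c hf hδ0 hδ1 hij hkl hjk hfkj

end Payoff

theorem lemma2_general {I : Type*} [Fintype I] [DecidableEq I]
    (A : Finset I) (fα fβ c δ : ℝ)
    (hfαβ : fβ < fα) (hfβ : 0 < fβ)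
    (hδ0 : 0 < δ) (hδ1 : δ < 1)
    (g : SimpleGraph I) (hSE : StronglyEfficient (fTheta A fα fβ) c δ g) :
    ∀ i j k l : I, g.Adj i j → g.Adj k l → g.Reachable i k := by
  have hf : ∀ x, 0 < fTheta A fα fβ x := fun x => by
    unfold fTheta
    split_ifs <;> linarith
  exact fun i j k l hij hkl => hSE.reachable_of_adj_of_adj hf hδ0 hδ1.le hij hkl

/-- Lemma 2: a strongly efficient network has at most one non-empty component:
any two links lie in the same connected component. -/
theorem lemma2 {I : Type*} [Fintype I] [DecidableEq I]
    (A : Finset I) (fα fβ c δ : ℝ)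
    (hA : 1 ≤ A.card) (hB : 1 ≤ Aᶜ.card)
    (hfαβ : fβ < fα) (hfβ : 0 < fβ) (hc : 0 < c)
    (hδ0 : 0 < δ) (hδ1 : δ < 1)
    (g : SimpleGraph I) (hSE : StronglyEfficient (fTheta A fα fβ) c δ g) :
    ∀ i j k l : I, g.Adj i j → g.Adj k l → g.Reachable i k :=
  lemma2_general A fα fβ c δ hfαβ hfβ hδ0 hδ1 g hSE
end
end

section
/- Proposition 4(d): Suppose n_α ≥ 2 and f_α + δ·((n_α−1)·f_α + (n_β−1)·f_β) > c > max{ f_α + δ·((n_α−2)·f_α + n_β·f_β), (1−δ)·f_α }. Then the maximum over all networks g on I of u_i(g) equals 0 when i is a type-α agent, and equals f_α + δ·((n_α−1)·f_α + (n_β−1)·f_β) − c when i is a type-β agent; in both cases the maximum is attained. -/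
open Finset

noncomputable section

open scoped Classical

variable {I : Type*}

/-!
An agent without links gets `0`. An agent with `k ≥ 1` links gets at most `f_α` from each
neighbour and at most `δ f_j` from every other agent `j`, so its payoff is at most
`δ Σ_{j ≠ i} f_j + k ((1 - δ) f_α - c)`; since `c > (1 - δ) f_α` this bound is largest at `k = 1`.
For a type-α agent the bound at `k = 1` is negative by the second inequality, so the empty network
is optimal. For a type-β agent it is the payoff of a leaf of the star centred at a type-α agent,
and it is positive by the first inequality.
-/

section Payoff

variable {f : I → ℝ} {c δ : ℝ} {g : SimpleGraph I} {i : I}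

lemma payoff_eq_zero_of_forall_not_adj [Fintype I] (h : ∀ j, ¬ g.Adj i j) :
    payoff f c δ g i = 0 := by
  have hR : (univ.filter fun j => j ≠ i ∧ g.Reachable i j) = ∅ := by
    refine filter_eq_empty_iff.2 fun j _ ⟨hne, ⟨p⟩⟩ => ?_
    cases p with
    | nil => exact hne rfl
    | cons hadj _ => exact h _ hadj
  have hN : (univ.filter fun j => g.Adj i j) = ∅ := filter_eq_empty_iff.2 fun j _ => h j
  simp [payoff, hR, hN]

lemma discount_le_of_reachable (hδ0 : 0 ≤ δ) (hδ1 : δ ≤ 1) {j : I} (hfj : 0 ≤ f j)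
    (hne : j ≠ i) (hr : g.Reachable i j) :
    δ ^ (g.dist i j - 1) * f j ≤ δ * f j + (1 - δ) * (if g.Adj i j then f j else 0) := by
  split_ifs with hadj
  · nlinarith [pow_le_one₀ (n := g.dist i j - 1) hδ0 hδ1]
  · have hd : 1 ≤ g.dist i j - 1 := by
      have := hr.pos_dist_of_ne hne.symm
      have := mt SimpleGraph.dist_eq_one_iff_adj.1 hadj
      omega
    nlinarith [pow_le_pow_of_le_one hδ0 hδ1 hd]

lemma payoff_le_of_adj [Fintype I] {M : ℝ} (hf0 : ∀ j, 0 ≤ f j) (hfM : ∀ j, f j ≤ M)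
    (hδ0 : 0 ≤ δ) (hδ1 : δ ≤ 1) (hc : (1 - δ) * M ≤ c) {j₀ : I} (hj₀ : g.Adj i j₀) :
    payoff f c δ g i ≤ δ * (∑ j, f j - f i) + (1 - δ) * M - c := by
  set N := univ.filter fun j => g.Adj i j
  set w : I → ℝ := fun j => δ * f j + (1 - δ) * (if g.Adj i j then f j else 0)
  have hw0 : ∀ j, 0 ≤ w j := fun j => by
    have : 0 ≤ if g.Adj i j then f j else 0 := by split_ifs <;> simp [hf0]
    have := hf0 j
    positivity
  have hbenefit : ∑ j ∈ univ.filter (fun j => j ≠ i ∧ g.Reachable i j),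
      δ ^ (g.dist i j - 1) * f j ≤ δ * (∑ j, f j - f i) + (1 - δ) * ∑ j ∈ N, f j := calc
    _ ≤ ∑ j ∈ univ.filter (fun j => j ≠ i ∧ g.Reachable i j), w j := by
      refine sum_le_sum fun j hj => ?_
      obtain ⟨hne, hr⟩ := (mem_filter.1 hj).2
      exact discount_le_of_reachable hδ0 hδ1 (hf0 j) hne hr
    _ ≤ ∑ j ∈ univ.erase i, w j :=
      sum_le_sum_of_subset_of_nonneg (fun j hj => mem_erase.2 ⟨(mem_filter.1 hj).2.1, mem_univ j⟩)
        fun j _ _ => hw0 j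
    _ = δ * (∑ j, f j - f i) + (1 - δ) * ∑ j ∈ N, f j := by
      simp only [w, sum_erase_eq_sub (mem_univ i), sum_add_distrib, ← mul_sum, sum_ite,
        sum_const_zero, add_zero, SimpleGraph.irrefl, if_false, N]
      ring
  have hdirect : ∑ j ∈ N, f j ≤ N.card * M := by
    simpa using sum_le_sum fun j (_ : j ∈ N) => hfM j
  have hk : (1 : ℝ) ≤ N.card := by
    exact_mod_cast card_pos.2 ⟨j₀, mem_filter.2 ⟨mem_univ j₀, hj₀⟩⟩
  have hcost : (N.card - 1) * ((1 - δ) * M) ≤ (N.card - 1) * c :=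
    mul_le_mul_of_nonneg_left hc (by linarith)
  unfold payoff
  linarith [mul_le_mul_of_nonneg_left hdirect (by linarith : 0 ≤ 1 - δ)]

lemma payoff_le_max [Fintype I] {M : ℝ} (hf0 : ∀ j, 0 ≤ f j) (hfM : ∀ j, f j ≤ M)
    (hδ0 : 0 ≤ δ) (hδ1 : δ ≤ 1) (hc : (1 - δ) * M ≤ c) (g : SimpleGraph I) (i : I) :
    payoff f c δ g i ≤ max 0 (δ * (∑ j, f j - f i) + (1 - δ) * M - c) := by
  by_cases h : ∃ j, g.Adj i j
  · obtain ⟨j, hj⟩ := h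
    exact le_max_of_le_right (payoff_le_of_adj hf0 hfM hδ0 hδ1 hc hj)
  · exact (payoff_eq_zero_of_forall_not_adj (not_exists.1 h)).trans_le (le_max_left _ _)

end Payoff

section Star

variable {i₀ : I}

lemma starAll_adj_center {i : I} (hi : i ≠ i₀) : (starAll i₀).Adj i i₀ := ⟨hi, Or.inr rfl⟩

lemma starAll_reachable (i j : I) : (starAll i₀).Reachable i j := by
  have hcenter : ∀ k, (starAll i₀).Reachable k i₀ := fun k => by
    by_cases hk : k = i₀
    · exact hk ▸ SimpleGraph.Reachable.rfl
    · exact (starAll_adj_center hk).reachable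
  exact (hcenter i).trans (hcenter j).symm

lemma starAll_dist_of_ne {i j : I} (hi : i ≠ i₀) (hj : j ≠ i₀) (hij : i ≠ j) :
    (starAll i₀).dist i j = 2 := by
  have hle : (starAll i₀).dist i j ≤ 2 :=
    SimpleGraph.dist_le ((SimpleGraph.Walk.nil.cons (starAll_adj_center hj).symm).cons
      (starAll_adj_center hi))
  have hpos := (starAll_reachable (i₀ := i₀) i j).pos_dist_of_ne hij
  have hne1 : (starAll i₀).dist i j ≠ 1 := fun h => by
    obtain ⟨-, h' | h'⟩ := SimpleGraph.dist_eq_one_iff_adj.1 h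
    exacts [hi h', hj h']
  omega

lemma payoff_starAll_of_ne [Fintype I] (f : I → ℝ) (c δ : ℝ) {i : I} (hi : i ≠ i₀) :
    payoff f c δ (starAll i₀) i = f i₀ + δ * (∑ j, f j - f i - f i₀) - c := by
  have hR : (univ.filter fun j => j ≠ i ∧ (starAll i₀).Reachable i j) = univ.erase i := by
    ext j; simp [starAll_reachable]
  have hN : (univ.filter fun j => (starAll i₀).Adj i j) = {i₀} := by
    ext j
    rw [mem_filter, mem_singleton]
    constructor
    · rintro ⟨-, -, h | h⟩
      exacts [absurd h hi, h]
    · rintro rfl; exact ⟨mem_univ _, starAll_adj_center hi⟩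
  have hi₀ : i₀ ∈ univ.erase i := mem_erase.2 ⟨hi.symm, mem_univ _⟩
  have hfar : ∀ j ∈ (univ.erase i).erase i₀, δ ^ ((starAll i₀).dist i j - 1) * f j = δ * f j := by
    intro j hj
    obtain ⟨hj₀, hji⟩ : j ≠ i₀ ∧ j ≠ i := by simpa using hj
    rw [starAll_dist_of_ne hi hj₀ hji.symm, pow_one]
  rw [payoff, hR, hN, ← add_sum_erase _ _ hi₀, sum_congr rfl hfar, ← mul_sum,
    sum_erase_eq_sub hi₀, sum_erase_eq_sub (mem_univ i),
    SimpleGraph.dist_eq_one_iff_adj.2 (starAll_adj_center hi)]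
  simp

end Star

section TwoTypes

variable [DecidableEq I] {A : Finset I} {fα fβ : ℝ}

lemma fTheta_of_mem {j : I} (hj : j ∈ A) : fTheta A fα fβ j = fα := if_pos hj

lemma fTheta_of_notMem {j : I} (hj : j ∉ A) : fTheta A fα fβ j = fβ := if_neg hj

lemma sum_fTheta [Fintype I] : ∑ j, fTheta A fα fβ j = A.card * fα + Aᶜ.card * fβ := by
  rw [← sum_add_sum_compl A, sum_congr rfl fun j => fTheta_of_mem,
    sum_congr rfl fun j hj => fTheta_of_notMem (mem_compl.1 hj)]
  simp

end TwoTypes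

theorem prop4d_general {I : Type*} [Fintype I] [DecidableEq I]
    (A : Finset I) (fα fβ c δ : ℝ)
    (hA : 1 ≤ A.card)
    (hfαβ : fβ < fα) (hfβ : 0 < fβ)
    (hδ0 : 0 < δ) (hδ1 : δ < 1)
    (h1 : fα + δ * (((A.card : ℝ) - 1) * fα + ((Aᶜ.card : ℝ) - 1) * fβ) > c)
    (h2 : c > max (fα + δ * (((A.card : ℝ) - 2) * fα + (Aᶜ.card : ℝ) * fβ)) ((1 - δ) * fα)) :
    (∀ i ∈ A, IsGreatest (Set.range fun g : SimpleGraph I => payoff (fTheta A fα fβ) c δ g i)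
      0) ∧
    (∀ i ∉ A, IsGreatest (Set.range fun g : SimpleGraph I => payoff (fTheta A fα fβ) c δ g i)
      (fα + δ * (((A.card : ℝ) - 1) * fα + ((Aᶜ.card : ℝ) - 1) * fβ) - c)) := by
  obtain ⟨hcα, hcδ⟩ := max_lt_iff.1 h2
  have hbound := payoff_le_max (f := fTheta A fα fβ) (M := fα)
    (fun j => by unfold fTheta; split_ifs <;> linarith)
    (fun j => by unfold fTheta; split_ifs <;> linarith) hδ0.le hδ1.le hcδ.le
  constructor
  · intro i hi
    refine ⟨⟨⊥, payoff_eq_zero_of_forall_not_adj fun j => id⟩, Set.forall_mem_range.2 fun g => ?_⟩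
    refine (hbound g i).trans (max_le le_rfl ?_)
    rw [sum_fTheta, fTheta_of_mem hi]
    linarith
  · intro i hi
    obtain ⟨i₀, hi₀⟩ := card_pos.1 hA
    have hne : i ≠ i₀ := fun h => hi (h ▸ hi₀)
    refine ⟨⟨starAll i₀, ?_⟩, Set.forall_mem_range.2 fun g => ?_⟩
    · dsimp only
      rw [payoff_starAll_of_ne _ _ _ hne, sum_fTheta, fTheta_of_notMem hi, fTheta_of_mem hi₀]
      ring
    · refine (hbound g i).trans (max_le (by linarith) (le_of_eq ?_))
      rw [sum_fTheta, fTheta_of_notMem hi]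
      ring

/-- Proposition 4(d): the attained maximum one-period payoff of an agent over
all networks: `0` for type-α agents, positive for type-β agents. -/
theorem prop4d {I : Type*} [Fintype I] [DecidableEq I]
    (A : Finset I) (fα fβ c δ : ℝ)
    (hA : 1 ≤ A.card) (hB : 1 ≤ Aᶜ.card)
    (hfαβ : fβ < fα) (hfβ : 0 < fβ) (hc : 0 < c)
    (hδ0 : 0 < δ) (hδ1 : δ < 1)
    (hA2 : 2 ≤ A.card)
    (h1 : fα + δ * (((A.card : ℝ) - 1) * fα + ((Aᶜ.card : ℝ) - 1) * fβ) > c)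
    (h2 : c > max (fα + δ * (((A.card : ℝ) - 2) * fα + (Aᶜ.card : ℝ) * fβ)) ((1 - δ) * fα)) :
    (∀ i ∈ A, IsGreatest (Set.range fun g : SimpleGraph I => payoff (fTheta A fα fβ) c δ g i)
      0) ∧
    (∀ i ∉ A, IsGreatest (Set.range fun g : SimpleGraph I => payoff (fTheta A fα fβ) c δ g i)
      (fα + δ * (((A.card : ℝ) - 1) * fα + ((Aᶜ.card : ℝ) - 1) * fβ) - c)) :=
  prop4d_general A fα fβ c δ hA hfαβ hfβ hδ0 hδ1 h1 h2
end
end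

section
/- Proposition 5(c): Suppose (1−δ)·f_α > c > (1−δ)·(f_α+f_β)/2 and (1+δ(n_α−1))·f_α + (1+δ(n_α+n_β−2))·f_β > 2c, and let g^e be the network consisting of all pairs of distinct type-α agents together with the edges {i₀, j} for every j ∈ B, for a fixed type-α agent i₀ ∈ A (the strongly efficient network of Theorem 2(c)). Then g^e is core-stable if and only if u_{i₀}(g^e) ≥ 0. -/
/-!
Under `(1 - δ) fα > c > (1 - δ) (fα + fβ) / 2`, a direct link is the best possible relation to a
type-α agent and a link at distance two the best possible relation to a type-β agent. Every agent
other than the hub `i₀` gets exactly this optimum from each other agent in `g^e`, so a blocking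
coalition containing such an agent must reproduce all of its relations, which forces `g' = g^e`.
The only remaining coalition is `{i₀}` alone, whose payoff `0` blocks exactly when
`u_{i₀}(g^e) < 0`.
-/

open Finset

noncomputable section

open scoped Classical

variable {I : Type*}

open SimpleGraph

theorem SimpleGraph.eq_of_adj_iff_of_ne {V : Type*} {G H : SimpleGraph V} (v : V)
    (h : ∀ x, x ≠ v → ∀ y, G.Adj x y ↔ H.Adj x y) : G = H := by
  ext x y
  by_cases hx : x = v
  · by_cases hy : y = v
    · simp [hx, hy]
    · rw [G.adj_comm, H.adj_comm, h y hy]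
  · exact h x hx y

section Payoff

/-- The summand of `payoff f c δ g i` due to agent `j`, the cost of a link `ij` charged to it. -/
def payoffTerm (f : I → ℝ) (c δ : ℝ) (g : SimpleGraph I) (i j : I) : ℝ :=
  if j ≠ i ∧ g.Reachable i j then δ ^ (g.dist i j - 1) * f j - (if g.Adj i j then c else 0)
  else 0

variable {f : I → ℝ} {c δ : ℝ} {g : SimpleGraph I} {i j : I}

theorem payoff_eq_sum_payoffTerm [Fintype I] :
    payoff f c δ g i = ∑ j, payoffTerm f c δ g i j := by
  have hadj : (univ.filter fun j => g.Adj i j) =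
      (univ.filter fun j => j ≠ i ∧ g.Reachable i j).filter (g.Adj i) := by
    ext j
    simp only [mem_filter, mem_univ, true_and]
    exact ⟨fun h => ⟨⟨h.ne', h.reachable⟩, h⟩, And.right⟩
  rw [payoff, hadj, card_filter, Nat.cast_sum, sum_mul, ← sum_sub_distrib, sum_filter]
  refine sum_congr rfl fun j _ => ?_
  simp only [payoffTerm]
  split_ifs <;> simp

theorem payoffTerm_self : payoffTerm f c δ g i i = 0 := by
  simp [payoffTerm]

theorem payoffTerm_of_adj (h : g.Adj i j) : payoffTerm f c δ g i j = f j - c := by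
  simp [payoffTerm, h, h.ne', h.reachable, dist_eq_one_iff_adj.2 h]

theorem payoffTerm_of_not_reachable (h : ¬ g.Reachable i j) : payoffTerm f c δ g i j = 0 := by
  simp [payoffTerm, h]

theorem payoffTerm_of_dist_eq_two (h : g.dist i j = 2) : payoffTerm f c δ g i j = δ * f j := by
  have hr : g.Reachable i j := Reachable.of_dist_ne_zero (by omega)
  have hne : j ≠ i := by rintro rfl; simp at h
  have hadj : ¬ g.Adj i j := fun hadj => by simp [dist_eq_one_iff_adj.2 hadj] at h
  simp [payoffTerm, hr, hne, hadj, h]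

theorem reachable_of_payoffTerm_pos (h : 0 < payoffTerm f c δ g i j) : g.Reachable i j := by
  by_contra hr
  simp [payoffTerm_of_not_reachable hr] at h

theorem payoffTerm_le_of_not_adj (hδ0 : 0 ≤ δ) (hδ1 : δ ≤ 1) (hf : 0 ≤ f j)
    (h : ¬ g.Adj i j) : payoffTerm f c δ g i j ≤ δ * f j := by
  unfold payoffTerm
  split_ifs with hr
  · have h2 : 2 ≤ g.dist i j := by
      have := hr.2.pos_dist_of_ne hr.1.symm
      have := mt dist_eq_one_iff_adj.1 h
      omega
    have : δ ^ (g.dist i j - 1) ≤ δ ^ 1 := pow_le_pow_of_le_one hδ0 hδ1 (by omega)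
    rw [pow_one] at this
    linarith [mul_le_mul_of_nonneg_right this hf]
  · positivity

theorem payoffTerm_le_max (hδ0 : 0 ≤ δ) (hδ1 : δ ≤ 1) (hf : 0 ≤ f j) :
    payoffTerm f c δ g i j ≤ max (f j - c) (δ * f j) := by
  by_cases h : g.Adj i j
  · exact (payoffTerm_of_adj h).le.trans (le_max_left _ _)
  · exact (payoffTerm_le_of_not_adj hδ0 hδ1 hf h).trans (le_max_right _ _)

theorem payoff_bot [Fintype I] : payoff f c δ ⊥ i = 0 := by
  rw [payoff_eq_sum_payoffTerm]
  refine Finset.sum_eq_zero fun j _ => ?_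
  by_cases hj : j = i
  · rw [hj, payoffTerm_self]
  · exact payoffTerm_of_not_reachable (by rw [reachable_bot]; exact Ne.symm hj)

theorem payoffTerm_eq_of_le_of_payoff_le [Fintype I] {g' : SimpleGraph I}
    (hle : ∀ j, payoffTerm f c δ g' i j ≤ payoffTerm f c δ g i j)
    (hpayoff : payoff f c δ g i ≤ payoff f c δ g' i) (j : I) :
    payoffTerm f c δ g' i j = payoffTerm f c δ g i j := by
  rw [payoff_eq_sum_payoffTerm, payoff_eq_sum_payoffTerm] at hpayoff
  exact (Finset.sum_eq_sum_iff_of_le fun j _ => hle j).1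
    (le_antisymm (Finset.sum_le_sum fun j _ => hle j) hpayoff) j (Finset.mem_univ j)

end Payoff

theorem mem_of_reachable_of_adj_mem {g : SimpleGraph I} {s : Finset I}
    (hs : ∀ i j, g.Adj i j → i ∈ s ∧ j ∈ s) {i j : I} (hi : i ∈ s) (h : g.Reachable i j) :
    j ∈ s := by
  induction (reachable_iff_reflTransGen i j).1 h with
  | refl => exact hi
  | tail _ hadj _ => exact (hs _ _ hadj).2

theorem eq_bot_of_adj_mem_of_subsingleton {g : SimpleGraph I} {s : Finset I} {v : I}
    (hs : ∀ i j, g.Adj i j → i ∈ s ∧ j ∈ s) (hv : ∀ i ∈ s, i = v) : g = ⊥ := by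
  ext i j
  simp only [bot_adj, iff_false]
  intro h
  exact h.ne ((hv i (hs i j h).1).trans (hv j (hs i j h).2).symm)

section CoreStar

variable {A : Finset I} {i₀ i j : I}

theorem coreStar_adj_hub (hi₀ : i₀ ∈ A) (hi : i ≠ i₀) : (coreStar A i₀).Adj i i₀ := by
  by_cases hiA : i ∈ A
  · exact ⟨hi, Or.inl ⟨hiA, hi₀⟩⟩
  · exact ⟨hi, Or.inr (Or.inr ⟨rfl, hiA⟩)⟩

theorem mem_of_coreStar_adj (hi₀ : i₀ ∈ A) (hi : i ≠ i₀) (h : (coreStar A i₀).Adj i j) :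
    j ∈ A := by
  rcases h with ⟨-, ⟨-, hj⟩ | ⟨rfl, -⟩ | ⟨rfl, -⟩⟩
  exacts [hj, absurd rfl hi, hi₀]

theorem coreStar_dist_eq_two (hi₀ : i₀ ∈ A) (hne : i ≠ j) (h : ¬ (coreStar A i₀).Adj i j) :
    (coreStar A i₀).dist i j = 2 := by
  have hi : i ≠ i₀ := by rintro rfl; exact h (coreStar_adj_hub hi₀ hne.symm).symm
  have hj : j ≠ i₀ := by rintro rfl; exact h (coreStar_adj_hub hi₀ hi)
  have hle : (coreStar A i₀).dist i j ≤ 2 :=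
    dist_le (.cons (coreStar_adj_hub hi₀ hi) (coreStar_adj_hub hi₀ hj).symm.toWalk)
  have hpos := (Walk.reachable (.cons (coreStar_adj_hub hi₀ hi)
    (coreStar_adj_hub hi₀ hj).symm.toWalk)).pos_dist_of_ne hne
  have := mt dist_eq_one_iff_adj.1 h
  omega

theorem payoffTerm_coreStar {f : I → ℝ} {c δ : ℝ} (hi₀ : i₀ ∈ A) (hj : j ≠ i) :
    payoffTerm f c δ (coreStar A i₀) i j =
      if (coreStar A i₀).Adj i j then f j - c else δ * f j := by
  split_ifs with h
  · exact payoffTerm_of_adj h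
  · exact payoffTerm_of_dist_eq_two (coreStar_dist_eq_two hi₀ hj.symm h)

end CoreStar

structure LinkRegime (fα fβ c δ : ℝ) : Prop where
  δ_pos : 0 < δ
  δ_lt_one : δ < 1
  fα_pos : 0 < fα
  fβ_pos : 0 < fβ
  direct_better_α : δ * fα < fα - c
  indirect_better_β : fβ - c < δ * fβ

section Blocking

variable [DecidableEq I] {A : Finset I} {fα fβ c δ : ℝ} {i₀ i j : I}

namespace LinkRegime

theorem fTheta_pos (hr : LinkRegime fα fβ c δ) (j : I) : 0 < fTheta A fα fβ j := by
  unfold fTheta; split_ifs; exacts [hr.fα_pos, hr.fβ_pos]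

theorem fTheta_sub_ne (hr : LinkRegime fα fβ c δ) (j : I) :
    fTheta A fα fβ j - c ≠ δ * fTheta A fα fβ j := by
  unfold fTheta; split_ifs; exacts [hr.direct_better_α.ne', hr.indirect_better_β.ne]

theorem payoffTerm_le_coreStar (hr : LinkRegime fα fβ c δ) (hi₀ : i₀ ∈ A)
    {g' : SimpleGraph I} (hi : i ≠ i₀) (hβα : i ∉ A → j ∈ A → j ≠ i₀ → ¬ g'.Adj i j) :
    payoffTerm (fTheta A fα fβ) c δ g' i j ≤
      payoffTerm (fTheta A fα fβ) c δ (coreStar A i₀) i j := by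
  rcases eq_or_ne j i with rfl | hj
  · simp only [payoffTerm_self, le_refl]
  have hF := (hr.fTheta_pos (A := A) j).le
  have hmax := payoffTerm_le_max (c := c) (g := g') (i := i) hr.δ_pos.le hr.δ_lt_one.le hF
  rw [payoffTerm_coreStar hi₀ hj]
  split_ifs with hadj
  · have hjA := mem_of_coreStar_adj hi₀ hi hadj
    refine hmax.trans (max_le le_rfl ?_)
    simpa [fTheta, hjA] using hr.direct_better_α.le
  · by_cases hjA : j ∈ A
    · have hiA : i ∉ A := fun hiA => hadj ⟨hj.symm, Or.inl ⟨hiA, hjA⟩⟩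
      have hji : j ≠ i₀ := by rintro rfl; exact hadj (coreStar_adj_hub hi₀ hi)
      exact payoffTerm_le_of_not_adj hr.δ_pos.le hr.δ_lt_one.le hF (hβα hiA hjA hji)
    · refine hmax.trans (max_le ?_ le_rfl)
      simpa [fTheta, hjA] using hr.indirect_better_β.le

theorem adj_iff_and_reachable_of_payoffTerm_eq (hr : LinkRegime fα fβ c δ) (hi₀ : i₀ ∈ A)
    {g' : SimpleGraph I} (hi : i ≠ i₀) (hj : j ≠ i)
    (h : payoffTerm (fTheta A fα fβ) c δ g' i j =
      payoffTerm (fTheta A fα fβ) c δ (coreStar A i₀) i j) :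
    (g'.Adj i j ↔ (coreStar A i₀).Adj i j) ∧ g'.Reachable i j := by
  rw [payoffTerm_coreStar hi₀ hj] at h
  have hF := hr.fTheta_pos (A := A) j
  refine ⟨⟨fun h' => ?_, fun hadj => ?_⟩,
    reachable_of_payoffTerm_pos (f := fTheta A fα fβ) (c := c) (δ := δ) ?_⟩
  · by_contra hadj
    rw [payoffTerm_of_adj h', if_neg hadj] at h
    exact hr.fTheta_sub_ne j h
  · by_contra h'
    rw [if_pos hadj] at h
    have := payoffTerm_le_of_not_adj (c := c) hr.δ_pos.le hr.δ_lt_one.le hF.le h'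
    simp only [fTheta, mem_of_coreStar_adj hi₀ hi hadj, if_true] at h this
    linarith [hr.direct_better_α]
  · rw [h]
    split_ifs with hadj
    · simp only [fTheta, mem_of_coreStar_adj hi₀ hi hadj, if_true]
      linarith [hr.direct_better_α, mul_pos hr.δ_pos hr.fα_pos]
    · exact mul_pos hr.δ_pos hF

variable [Fintype I] {I' : Finset I} {g' : SimpleGraph I}

theorem payoffTerm_eq_coreStar_of_mem (hr : LinkRegime fα fβ c δ) (hi₀ : i₀ ∈ A)
    (hE : ∀ i j, g'.Adj i j → i ∈ I' ∧ j ∈ I')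
    (hweak : ∀ i ∈ I', payoff (fTheta A fα fβ) c δ (coreStar A i₀) i ≤
      payoff (fTheta A fα fβ) c δ g' i)
    (hi : i ∈ I') (hii₀ : i ≠ i₀) (j : I) :
    payoffTerm (fTheta A fα fβ) c δ g' i j =
      payoffTerm (fTheta A fα fβ) c δ (coreStar A i₀) i j := by
  have forced : ∀ i ∈ I', i ≠ i₀ → (∀ j, i ∉ A → j ∈ A → j ≠ i₀ → ¬ g'.Adj i j) →
      ∀ j, payoffTerm (fTheta A fα fβ) c δ g' i j =
        payoffTerm (fTheta A fα fβ) c δ (coreStar A i₀) i j :=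
    fun i hi hii₀ hβα => payoffTerm_eq_of_le_of_payoff_le
      (fun j => hr.payoffTerm_le_coreStar hi₀ hii₀ (hβα j)) (hweak i hi)
  by_cases hiA : i ∈ A
  · exact forced i hi hii₀ (fun _ h => absurd hiA h) j
  refine forced i hi hii₀ (fun k _ hkA hki₀ hadj => ?_) j
  -- the type-α member `k ≠ i₀` keeps its `coreStar` links, and `i` is not among them
  have hk := hr.adj_iff_and_reachable_of_payoffTerm_eq hi₀ hki₀ hadj.ne
    (forced k (hE i k hadj).2 hki₀ (fun _ h => absurd hkA h) i)
  rcases hk.1.1 hadj.symm with ⟨-, ⟨-, h⟩ | ⟨h, -⟩ | ⟨h, -⟩⟩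
  exacts [hiA h, hki₀ h, hii₀ h]

theorem eq_coreStar_of_mem (hr : LinkRegime fα fβ c δ) (hi₀ : i₀ ∈ A)
    (hE : ∀ i j, g'.Adj i j → i ∈ I' ∧ j ∈ I')
    (hweak : ∀ i ∈ I', payoff (fTheta A fα fβ) c δ (coreStar A i₀) i ≤
      payoff (fTheta A fα fβ) c δ g' i)
    {k : I} (hk : k ∈ I') (hki₀ : k ≠ i₀) : g' = coreStar A i₀ := by
  have hrel : ∀ i ∈ I', i ≠ i₀ → ∀ j, j ≠ i →
      (g'.Adj i j ↔ (coreStar A i₀).Adj i j) ∧ g'.Reachable i j :=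
    fun i hi hii₀ j hj => hr.adj_iff_and_reachable_of_payoffTerm_eq hi₀ hii₀ hj
      (hr.payoffTerm_eq_coreStar_of_mem hi₀ hE hweak hi hii₀ j)
  have hall : ∀ i, i ∈ I' := fun i => by
    rcases eq_or_ne i k with rfl | hik
    · exact hk
    · exact mem_of_reachable_of_adj_mem hE hk (hrel k hk hki₀ i hik).2
  refine eq_of_adj_iff_of_ne i₀ fun x hx y => ?_
  rcases eq_or_ne y x with rfl | hy
  · simp
  · exact (hrel x (hall x) hx y hy).1

end LinkRegime

end Blocking

theorem prop5c_general {I : Type*} [Fintype I] [DecidableEq I]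
    (A : Finset I) (fα fβ c δ : ℝ)
    (hfαβ : fβ < fα) (hfβ : 0 < fβ)
    (hδ0 : 0 < δ) (hδ1 : δ < 1)
    (h1 : (1 - δ) * fα > c) (h2 : c > (1 - δ) * ((fα + fβ) / 2))
    (i₀ : I) (hi₀ : i₀ ∈ A) :
    CoreStable (fTheta A fα fβ) c δ (coreStar A i₀) ↔
      payoff (fTheta A fα fβ) c δ (coreStar A i₀) i₀ ≥ 0 := by
  have hr : LinkRegime fα fβ c δ :=
    { δ_pos := hδ0, δ_lt_one := hδ1, fα_pos := hfβ.trans hfαβ, fβ_pos := hfβ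
      direct_better_α := by linarith
      indirect_better_β := by nlinarith [mul_pos (sub_pos.2 hδ1) (sub_pos.2 hfαβ)] }
  constructor
  · intro hstable
    by_contra! hneg
    refine hstable ⟨{i₀}, ⊥, by simp, ?_, i₀, mem_singleton_self i₀, ?_⟩
    · simpa [payoff_bot] using hneg.le
    · simpa [payoff_bot] using hneg
  · rintro hhub ⟨I', g', hE, hweak, i, hi, hlt⟩
    by_cases hother : ∃ k ∈ I', k ≠ i₀
    · obtain ⟨k, hk, hki₀⟩ := hother
      rw [hr.eq_coreStar_of_mem hi₀ hE hweak hk hki₀] at hlt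
      exact lt_irrefl _ hlt
    · push Not at hother
      rw [hother i hi, eq_bot_of_adj_mem_of_subsingleton hE hother, payoff_bot] at hlt
      linarith

/-- Proposition 5(c): under the conditions of Theorem 2(c), the strongly
efficient network is core-stable iff the hub `i₀` gets a non-negative payoff. -/
theorem prop5c {I : Type*} [Fintype I] [DecidableEq I]
    (A : Finset I) (fα fβ c δ : ℝ)
    (hA : 1 ≤ A.card) (hB : 1 ≤ Aᶜ.card)
    (hfαβ : fβ < fα) (hfβ : 0 < fβ) (hc : 0 < c)
    (hδ0 : 0 < δ) (hδ1 : δ < 1)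
    (h1 : (1 - δ) * fα > c) (h2 : c > (1 - δ) * ((fα + fβ) / 2))
    (h3 : (1 + δ * ((A.card : ℝ) - 1)) * fα + (1 + δ * ((A.card : ℝ) + (Aᶜ.card : ℝ) - 2)) * fβ > 2 * c)
    (i₀ : I) (hi₀ : i₀ ∈ A) :
    CoreStable (fTheta A fα fβ) c δ (coreStar A i₀) ↔
      payoff (fTheta A fα fβ) c δ (coreStar A i₀) i₀ ≥ 0 :=
  prop5c_general A fα fβ c δ hfαβ hfβ hδ0 hδ1 h1 h2 i₀ hi₀
end
end
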